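/- arXiv:2208.08471 — 7 statements merged into one kernel-verified Lean document; each statement's English description precedes it below -/
import Mathlib

section
/- Let U₁ and U₂ be independent random variables uniformly distributed on (0,1), and let θ₁, θ₂ > 0 with θ₁ + θ₂ = 1. Then for every p ∈ (0,1), ℙ((θ₁·U₁⁻¹ + θ₂·U₂⁻¹)⁻¹ ≤ p) > p; that is, the weighted harmonic mean of U₁ and U₂ is strictly first-order stochastically dominated by a uniform random variable on (0,1). -/
/-!
Let `a = θ₁p / (1 - θ₂p)` and `b = θ₂p / (1 - θ₁p)` be the points where the harmonic mean
reaches `p` when the other argument equals `1`. Since the harmonic mean is increasing in each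
argument and the arguments lie in `(0,1)`, it can exceed `p` only if `U₁ ≥ a` and `U₂ ≥ b`,
an event of probability `(1-a)(1-b) = (1-p)² / ((1-θ₁p)(1-θ₂p))` by independence. This is
strictly less than `1 - p` because `(1-θ₁p)(1-θ₂p) = 1 - p + θ₁θ₂p²`.
-/

open MeasureTheory ProbabilityTheory Set

/-- `X` is a Pareto(α) random variable under `P`: `P(X > t) = t^{-α}` for `t ≥ 1`,
and `X ≥ 1` almost surely. -/
def IsPareto {Ω : Type*} [MeasurableSpace Ω] (P : Measure Ω) (X : Ω → ℝ) (α : ℝ) : Prop :=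
  Measurable X ∧ P {ω | 1 ≤ X ω} = 1 ∧
    ∀ t : ℝ, 1 ≤ t → P {ω | t < X ω} = ENNReal.ofReal (t ^ (-α))

/-- `U` is uniformly distributed on `(0,1)` under `P`. -/
def IsUniform01 {Ω : Type*} [MeasurableSpace Ω] (P : Measure Ω) (U : Ω → ℝ) : Prop :=
  Measurable U ∧ Measure.map U P = volume.restrict (Set.Ioo (0:ℝ) 1)

namespace IsUniform01

variable {Ω : Type*} [MeasurableSpace Ω] {P : Measure Ω} {U : Ω → ℝ}

lemma ae_mem_Ioo (hU : IsUniform01 P U) : ∀ᵐ ω ∂P, U ω ∈ Ioo 0 1 := by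
  have h : ∀ᵐ x ∂(P.map U), x ∈ Ioo (0 : ℝ) 1 := hU.2 ▸ ae_restrict_mem measurableSet_Ioo
  exact ae_of_ae_map hU.1.aemeasurable h

lemma measure_preimage_Ici (hU : IsUniform01 P U) {c : ℝ} (hc : 0 < c) :
    P (U ⁻¹' Ici c) = ENNReal.ofReal (1 - c) := by
  have hIco : Ici c ∩ Ioo 0 1 = Ico c 1 := by
    ext x
    simp only [mem_inter_iff, mem_Ici, mem_Ioo, mem_Ico]
    constructor
    · rintro ⟨hcx, -, hx1⟩
      exact ⟨hcx, hx1⟩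
    · rintro ⟨hcx, hx1⟩
      exact ⟨hcx, hc.trans_le hcx, hx1⟩
  rw [← Measure.map_apply hU.1 measurableSet_Ici, hU.2,
    Measure.restrict_apply measurableSet_Ici, hIco, Real.volume_Ico]

end IsUniform01

section HarmonicMean

variable {θ₁ θ₂ p : ℝ}

lemma harmonic_mean_le_of_lt_div {u v : ℝ} (h2 : 0 ≤ θ₂) (hp : 0 < p)
    (hθp : θ₂ * p < 1) (hu : 0 < u) (hua : u < θ₁ * p / (1 - θ₂ * p)) (hv : 0 < v)
    (hv1 : v ≤ 1) :
    (θ₁ * u⁻¹ + θ₂ * v⁻¹)⁻¹ ≤ p := by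
  have hθp' : 0 < 1 - θ₂ * p := by linarith
  have hterm₁ : (1 - θ₂ * p) / p < θ₁ * u⁻¹ := by
    rw [lt_div_iff₀ hθp'] at hua
    rw [div_lt_iff₀ hp, ← div_eq_mul_inv, div_mul_eq_mul_div, lt_div_iff₀ hu]
    linarith
  have hterm₂ : θ₂ ≤ θ₂ * v⁻¹ := le_mul_of_one_le_right h2 (one_le_inv₀ hv |>.2 hv1)
  have hsum : p⁻¹ < θ₁ * u⁻¹ + θ₂ * v⁻¹ := by
    have : (1 - θ₂ * p) / p + θ₂ = p⁻¹ := by field_simp; ring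
    linarith
  exact (inv_lt_of_inv_lt₀ hp hsum).le

lemma harmonic_mean_le_or_le_and_le {u v : ℝ} (h1 : 0 < θ₁) (h2 : 0 < θ₂)
    (hsum : θ₁ + θ₂ = 1) (hp : 0 < p) (hp1 : p < 1) (hu : u ∈ Ioc 0 1) (hv : v ∈ Ioc 0 1) :
    (θ₁ * u⁻¹ + θ₂ * v⁻¹)⁻¹ ≤ p ∨
      (θ₁ * p / (1 - θ₂ * p) ≤ u ∧ θ₂ * p / (1 - θ₁ * p) ≤ v) := by
  have hθ₁p : θ₁ * p < 1 := by nlinarith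
  have hθ₂p : θ₂ * p < 1 := by nlinarith
  by_cases hua : u < θ₁ * p / (1 - θ₂ * p)
  · exact .inl (harmonic_mean_le_of_lt_div h2.le hp hθ₂p hu.1 hua hv.1 hv.2)
  by_cases hvb : v < θ₂ * p / (1 - θ₁ * p)
  · rw [add_comm]
    exact .inl (harmonic_mean_le_of_lt_div h1.le hp hθ₁p hv.1 hvb hu.1 hu.2)
  exact .inr ⟨not_lt.1 hua, not_lt.1 hvb⟩

lemma one_sub_div_mul_one_sub_div_lt (h1 : 0 < θ₁) (h2 : 0 < θ₂) (hsum : θ₁ + θ₂ = 1)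
    (hp : 0 < p) (hp1 : p < 1) :
    (1 - θ₁ * p / (1 - θ₂ * p)) * (1 - θ₂ * p / (1 - θ₁ * p)) < 1 - p := by
  have hθ₁p : 0 < 1 - θ₁ * p := by nlinarith
  have hθ₂p : 0 < 1 - θ₂ * p := by nlinarith
  have ha : 1 - θ₁ * p / (1 - θ₂ * p) = (1 - p) / (1 - θ₂ * p) := by
    rw [eq_div_iff hθ₂p.ne', sub_mul, div_mul_cancel₀ _ hθ₂p.ne']
    linear_combination (-p) * hsum
  have hb : 1 - θ₂ * p / (1 - θ₁ * p) = (1 - p) / (1 - θ₁ * p) := by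
    rw [eq_div_iff hθ₁p.ne', sub_mul, div_mul_cancel₀ _ hθ₁p.ne']
    linear_combination (-p) * hsum
  rw [ha, hb, div_mul_div_comm, div_lt_iff₀ (mul_pos hθ₂p hθ₁p)]
  have hexpand : (1 - θ₂ * p) * (1 - θ₁ * p) = 1 - p + θ₁ * θ₂ * p ^ 2 := by
    linear_combination (-p) * hsum
  rw [hexpand]
  have : 0 < θ₁ * θ₂ * p ^ 2 := by positivity
  nlinarith

end HarmonicMean

lemma ENNReal.ofReal_lt_of_one_le_add_ofReal {p q : ℝ} {x : ENNReal} (hp : 0 ≤ p) (hq : 0 ≤ q)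
    (hpq : p + q < 1) (h : 1 ≤ x + ENNReal.ofReal q) : ENNReal.ofReal p < x := by
  rw [← ENNReal.add_lt_add_iff_right ENNReal.ofReal_ne_top, ← ENNReal.ofReal_add hp hq]
  exact (ENNReal.ofReal_lt_one.2 hpq).trans_le h

/-- For independent uniform(0,1) random variables `U₁, U₂` and positive weights summing
to 1, the weighted harmonic mean is strictly first-order stochastically dominated by a
uniform(0,1) random variable: `P((θ₁/U₁ + θ₂/U₂)⁻¹ ≤ p) > p` for all `p ∈ (0,1)`. -/
theorem stmt0 {Ω : Type*} [MeasurableSpace Ω] (P : Measure Ω) [IsProbabilityMeasure P]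
    (U₁ U₂ : Ω → ℝ) (hU₁ : IsUniform01 P U₁) (hU₂ : IsUniform01 P U₂)
    (hind : IndepFun U₁ U₂ P)
    (θ₁ θ₂ : ℝ) (h1 : 0 < θ₁) (h2 : 0 < θ₂) (hsum : θ₁ + θ₂ = 1) :
    ∀ p ∈ Set.Ioo (0:ℝ) 1,
      ENNReal.ofReal p < P {ω | (θ₁ * (U₁ ω)⁻¹ + θ₂ * (U₂ ω)⁻¹)⁻¹ ≤ p} := by
  rintro p ⟨hp, hp1⟩
  set a := θ₁ * p / (1 - θ₂ * p)
  set b := θ₂ * p / (1 - θ₁ * p)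
  set A : Set Ω := {ω | (θ₁ * (U₁ ω)⁻¹ + θ₂ * (U₂ ω)⁻¹)⁻¹ ≤ p}
  set C : Set Ω := U₁ ⁻¹' Ici a ∩ U₂ ⁻¹' Ici b
  have ha : 0 < a := div_pos (by positivity) (by nlinarith)
  have hb : 0 < b := div_pos (by positivity) (by nlinarith)
  have ha1 : a ≤ 1 := div_le_one_of_le₀ (by nlinarith) (by nlinarith)
  have hb1 : b ≤ 1 := div_le_one_of_le₀ (by nlinarith) (by nlinarith)
  have hPC : P C = ENNReal.ofReal ((1 - a) * (1 - b)) := by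
    rw [hind.measure_inter_preimage_eq_mul _ _ measurableSet_Ici measurableSet_Ici,
      hU₁.measure_preimage_Ici ha, hU₂.measure_preimage_Ici hb,
      ← ENNReal.ofReal_mul (sub_nonneg.2 ha1)]
  have hcover : (univ : Set Ω) ≤ᵐ[P] (A ∪ C : Set Ω) := by
    filter_upwards [hU₁.ae_mem_Ioo, hU₂.ae_mem_Ioo] with ω hω₁ hω₂ _
    exact harmonic_mean_le_or_le_and_le h1 h2 hsum hp hp1
      (Ioo_subset_Ioc_self hω₁) (Ioo_subset_Ioc_self hω₂)
  have hCA : 1 ≤ P A + P C := by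
    calc 1 = P univ := measure_univ.symm
      _ ≤ P (A ∪ C) := measure_mono_ae hcover
      _ ≤ P A + P C := measure_union_le A C
  exact ENNReal.ofReal_lt_of_one_le_add_ofReal hp.le
    (mul_nonneg (sub_nonneg.2 ha1) (sub_nonneg.2 hb1))
    (by linarith [one_sub_div_mul_one_sub_div_lt h1 h2 hsum hp hp1]) (hPC ▸ hCA)
end

section
/- Let X, X₁, …, Xₙ be iid Pareto(α) random variables with α ∈ (0,1], i.e., ℙ(X > t) = t^{-α} for t ≥ 1, and let (θ₁,…,θₙ) be nonnegative weights summing to 1. Then X ≤_st ∑ᵢ θᵢ Xᵢ, i.e., ℙ(∑ᵢ θᵢ Xᵢ > t) ≥ ℙ(X > t) for all t ∈ ℝ. -/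
/-!
If `∑ θᵢ Xᵢ ≤ t` and every `Xᵢ ≥ 1`, then `θᵢ (Xᵢ - 1) ≤ t - 1` for each `i`, so by independence
`ℙ(∑ θᵢ Xᵢ ≤ t) ≤ ∏ᵢ G(θᵢ)` with `G(θ) = ℙ(θ (X - 1) ≤ t - 1) = 1 - (θ / (t - 1 + θ))^α`.
Concavity of `x ↦ x^α` for `α ≤ 1` makes `G` supermultiplicative, `G(x) G(y) ≤ G(x + y)`, hence
`∏ᵢ G(θᵢ) ≤ G(∑ θᵢ) = G(1) = 1 - t^{-α} = ℙ(X ≤ t)`.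
-/

open MeasureTheory ProbabilityTheory Set

lemma ConcaveOn.map_add_sub_map_le_of_le {s : Set ℝ} {f : ℝ → ℝ} (hf : ConcaveOn ℝ s f)
    {a b h : ℝ} (ha : a ∈ s) (hbh : b + h ∈ s) (hab : a ≤ b) (hh : 0 ≤ h) :
    f (b + h) - f b ≤ f (a + h) - f a := by
  rcases (show a ≤ b + h by linarith).eq_or_lt with heq | hlt
  · obtain rfl : h = 0 := by linarith
    obtain rfl : b = a := by linarith
    simp
  -- both `a + h` and `b` are convex combinations of `a` and `b + h`, with swapped weights
  have hT : 0 < b + h - a := sub_pos.2 hlt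
  have hw₁ : 0 ≤ (b - a) / (b + h - a) := div_nonneg (sub_nonneg.2 hab) hT.le
  have hw₂ : 0 ≤ h / (b + h - a) := div_nonneg hh hT.le
  have hw : (b - a) / (b + h - a) + h / (b + h - a) = 1 := by field_simp; ring
  have hah := hf.2 ha hbh hw₁ hw₂ hw
  have hb := hf.2 ha hbh hw₂ hw₁ ((add_comm _ _).trans hw)
  simp only [smul_eq_mul] at hah hb
  rw [show (b - a) / (b + h - a) * a + h / (b + h - a) * (b + h) = a + h by field_simp; ring]
    at hah
  rw [show h / (b + h - a) * a + (b - a) / (b + h - a) * (b + h) = b by field_simp; ring] at hb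
  linear_combination hah + hb - (f a + f (b + h)) * hw

lemma Real.one_sub_rpow_mul_one_sub_rpow_le {p u v : ℝ} (hp₀ : 0 ≤ p) (hp₁ : p ≤ 1)
    (hu₀ : 0 ≤ u) (hu₁ : u ≤ 1) (hv₀ : 0 ≤ v) (hv₁ : v ≤ 1) :
    (1 - u ^ p) * (1 - v ^ p) ≤ 1 - (u + v - u * v) ^ p := by
  have h := (Real.concaveOn_rpow hp₀ hp₁).map_add_sub_map_le_of_le (a := u * v) (b := u)
    (h := v - u * v) (mem_Ici.2 (by positivity)) (mem_Ici.2 (by nlinarith))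
    (mul_le_of_le_one_right hu₀ hv₁) (by nlinarith)
  rw [add_sub_cancel, ← add_sub_assoc] at h
  nlinarith [Real.mul_rpow hu₀ hv₀ (z := p)]

/-- `ℙ(θ (X - 1) ≤ s)` for `X ∼ Pareto(α)`, `θ ≥ 0` and `s ≥ 0` (for `θ = s = 0` the junk value
`0 / 0 = 0` still gives the right probability `1`). -/
noncomputable def paretoExcessCdf (α s θ : ℝ) : ℝ := 1 - (θ / (s + θ)) ^ α

section paretoExcessCdf

variable {α s x y : ℝ}

lemma paretoExcessCdf_zero (hα : α ≠ 0) : paretoExcessCdf α s 0 = 1 := by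
  simp [paretoExcessCdf, Real.zero_rpow hα]

lemma div_add_self_le_one (hs : 0 ≤ s) (hx : 0 ≤ x) : x / (s + x) ≤ 1 :=
  div_le_one_of_le₀ (by linarith) (by linarith)

lemma paretoExcessCdf_nonneg (hα : 0 ≤ α) (hs : 0 ≤ s) (hx : 0 ≤ x) :
    0 ≤ paretoExcessCdf α s x :=
  sub_nonneg.2 (Real.rpow_le_one (by positivity) (div_add_self_le_one hs hx) hα)

lemma div_add_div_sub_mul_div_le (hs : 0 ≤ s) (hx : 0 ≤ x) (hy : 0 ≤ y) :
    (x + y) / (s + (x + y)) ≤ x / (s + x) + y / (s + y) - x / (s + x) * (y / (s + y)) := by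
  rcases hs.eq_or_lt with rfl | hs
  · rcases hx.eq_or_lt with rfl | hx
    · simp
    · simp only [zero_add, div_self hx.ne', one_mul, add_sub_cancel_right]
      exact div_le_one_of_le₀ le_rfl (by positivity)
  · have h : x / (s + x) + y / (s + y) - x / (s + x) * (y / (s + y)) - (x + y) / (s + (x + y))
        = s * x * y / ((s + x) * (s + y) * (s + (x + y))) := by
      field_simp
      ring
    linarith [show 0 ≤ s * x * y / ((s + x) * (s + y) * (s + (x + y))) by positivity]

lemma paretoExcessCdf_mul_le (hα₀ : 0 ≤ α) (hα₁ : α ≤ 1) (hs : 0 ≤ s) (hx : 0 ≤ x) (hy : 0 ≤ y) :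
    paretoExcessCdf α s x * paretoExcessCdf α s y ≤ paretoExcessCdf α s (x + y) :=
  calc paretoExcessCdf α s x * paretoExcessCdf α s y
      ≤ 1 - (x / (s + x) + y / (s + y) - x / (s + x) * (y / (s + y))) ^ α :=
        Real.one_sub_rpow_mul_one_sub_rpow_le hα₀ hα₁ (by positivity) (div_add_self_le_one hs hx)
          (by positivity) (div_add_self_le_one hs hy)
    _ ≤ paretoExcessCdf α s (x + y) := by
        unfold paretoExcessCdf
        gcongr
        exact div_add_div_sub_mul_div_le hs hx hy

lemma prod_paretoExcessCdf_le {ι : Type*} (S : Finset ι) {θ : ι → ℝ} (hθ : ∀ i, 0 ≤ θ i)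
    (hα₀ : 0 < α) (hα₁ : α ≤ 1) (hs : 0 ≤ s) :
    ∏ i ∈ S, paretoExcessCdf α s (θ i) ≤ paretoExcessCdf α s (∑ i ∈ S, θ i) := by
  induction S using Finset.cons_induction with
  | empty => simp [paretoExcessCdf_zero hα₀.ne']
  | cons a S ha ih =>
    rw [Finset.prod_cons, Finset.sum_cons]
    calc paretoExcessCdf α s (θ a) * ∏ i ∈ S, paretoExcessCdf α s (θ i)
        ≤ paretoExcessCdf α s (θ a) * paretoExcessCdf α s (∑ i ∈ S, θ i) :=
          mul_le_mul_of_nonneg_left ih (paretoExcessCdf_nonneg hα₀.le hs (hθ a))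
      _ ≤ paretoExcessCdf α s (θ a + ∑ i ∈ S, θ i) :=
          paretoExcessCdf_mul_le hα₀.le hα₁ hs (hθ a) (Finset.sum_nonneg fun i _ => hθ i)

end paretoExcessCdf

lemma mul_sub_one_le_sum_mul_sub_one {ι : Type*} [Fintype ι] {θ x : ι → ℝ}
    (hθ : ∀ i, 0 ≤ θ i) (hθ₁ : ∑ i, θ i = 1) (hx : ∀ i, 1 ≤ x i) (i : ι) :
    θ i * (x i - 1) ≤ ∑ j, θ j * x j - 1 :=
  calc θ i * (x i - 1) ≤ ∑ j, θ j * (x j - 1) :=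
        Finset.single_le_sum (fun j _ => mul_nonneg (hθ j) (sub_nonneg.2 (hx j)))
          (Finset.mem_univ i)
    _ = ∑ j, θ j * x j - 1 := by simp only [mul_sub, mul_one, Finset.sum_sub_distrib, hθ₁]

namespace IsPareto

variable {Ω : Type*} [MeasurableSpace Ω] {P : Measure Ω} [IsProbabilityMeasure P] {X : Ω → ℝ}
  {α : ℝ}

lemma ae_one_le (hX : IsPareto P X α) : ∀ᵐ ω ∂P, 1 ≤ X ω :=
  (ae_iff_prob_eq_one (measurable_const.le' hX.1)).2 hX.2.1

lemma measure_le {c : ℝ} (hX : IsPareto P X α) (hc : 1 ≤ c) :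
    P {ω | X ω ≤ c} = ENNReal.ofReal (1 - c ^ (-α)) := by
  have hset : {ω | X ω ≤ c} = {ω | c < X ω}ᶜ := by ext; simp
  rw [hset, prob_compl_eq_one_sub (measurableSet_lt measurable_const hX.1), hX.2.2 c hc,
    ← ENNReal.ofReal_one, ← ENNReal.ofReal_sub _ (Real.rpow_nonneg (by linarith) _)]

lemma measure_mul_sub_one_le {θ s : ℝ} (hX : IsPareto P X α) (hα : α ≠ 0) (hθ : 0 ≤ θ)
    (hs : 0 ≤ s) : P {ω | θ * (X ω - 1) ≤ s} = ENNReal.ofReal (paretoExcessCdf α s θ) := by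
  rcases hθ.eq_or_lt with rfl | hθ
  · simp [hs, paretoExcessCdf, Real.zero_rpow hα]
  have hset : {ω | θ * (X ω - 1) ≤ s} = {ω | X ω ≤ 1 + s / θ} := by
    ext ω
    rw [mem_ofPred_eq, mem_ofPred_eq, ← le_div_iff₀' hθ, sub_le_iff_le_add']
  have hc : 1 + s / θ = (θ / (s + θ))⁻¹ := by field_simp; ring
  rw [hset, hX.measure_le (le_add_of_nonneg_right (by positivity)), paretoExcessCdf, hc,
    Real.rpow_neg (by positivity), Real.inv_rpow (by positivity), inv_inv]

end IsPareto

lemma measure_sum_mul_le_le {ι Ω : Type*} [Fintype ι] [MeasurableSpace Ω] {P : Measure Ω}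
    [IsProbabilityMeasure P] {α : ℝ} (hα : α ∈ Ioc (0 : ℝ) 1) {Xs : ι → Ω → ℝ}
    (hXs : ∀ i, IsPareto P (Xs i) α) (hind : iIndepFun Xs P) {θ : ι → ℝ} (hθ : ∀ i, 0 ≤ θ i)
    (hθ₁ : ∑ i, θ i = 1) {t : ℝ} (ht : 1 ≤ t) :
    P {ω | ∑ i, θ i * Xs i ω ≤ t} ≤ ENNReal.ofReal (1 - t ^ (-α)) := by
  have hs : 0 ≤ t - 1 := sub_nonneg.2 ht
  have hincl : {ω | ∑ i, θ i * Xs i ω ≤ t} ≤ᵐ[P]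
      ⋂ i, Xs i ⁻¹' {x | θ i * (x - 1) ≤ t - 1} := by
    filter_upwards [ae_all_iff.2 fun i => (hXs i).ae_one_le] with ω hω₁ hω
    exact mem_iInter.2 fun i =>
      (mul_sub_one_le_sum_mul_sub_one hθ hθ₁ hω₁ i).trans (sub_le_sub_right hω 1)
  calc P {ω | ∑ i, θ i * Xs i ω ≤ t}
      ≤ P (⋂ i, Xs i ⁻¹' {x | θ i * (x - 1) ≤ t - 1}) := measure_mono_ae hincl
    _ = ∏ i, P (Xs i ⁻¹' {x | θ i * (x - 1) ≤ t - 1}) :=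
        hind.meas_iInter fun i => ⟨_, measurableSet_le (by fun_prop) measurable_const, rfl⟩
    _ = ENNReal.ofReal (∏ i, paretoExcessCdf α (t - 1) (θ i)) := by
        rw [ENNReal.ofReal_prod_of_nonneg fun i _ => paretoExcessCdf_nonneg hα.1.le hs (hθ i)]
        exact Finset.prod_congr rfl fun i _ =>
          (hXs i).measure_mul_sub_one_le hα.1.ne' (hθ i) hs
    _ ≤ ENNReal.ofReal (paretoExcessCdf α (t - 1) (∑ i, θ i)) :=
        ENNReal.ofReal_le_ofReal (prod_paretoExcessCdf_le _ hθ hα.1 hα.2 hs)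
    _ = ENNReal.ofReal (1 - t ^ (-α)) := by
        rw [hθ₁, paretoExcessCdf, sub_add_cancel, one_div, Real.inv_rpow (by linarith),
          ← Real.rpow_neg (by linarith)]

/-- For iid Pareto(α) random variables with `α ∈ (0,1]` and weights in the simplex,
`X ≤_st ∑ θᵢ Xᵢ`: the weighted average dominates a single Pareto loss. -/
theorem stmt2 {Ω : Type*} [MeasurableSpace Ω] (P : Measure Ω) [IsProbabilityMeasure P]
    (n : ℕ) (α : ℝ) (hα : α ∈ Set.Ioc (0:ℝ) 1)
    (X : Ω → ℝ) (Xs : Fin n → Ω → ℝ)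
    (hX : IsPareto P X α) (hXs : ∀ i, IsPareto P (Xs i) α)
    (hind : iIndepFun Xs P)
    (θ : Fin n → ℝ) (hθ : ∀ i, 0 ≤ θ i) (hsum : ∑ i, θ i = 1) :
    ∀ t : ℝ, P {ω | t < X ω} ≤ P {ω | t < ∑ i, θ i * Xs i ω} := by
  have hsum_meas : Measurable fun ω => ∑ i, θ i * Xs i ω :=
    Finset.measurable_sum _ fun i _ => measurable_const.mul (hXs i).1
  have hdom : ∀ t, 1 ≤ t → P {ω | t < X ω} ≤ P {ω | t < ∑ i, θ i * Xs i ω} := by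
    intro t ht
    have hcompl : {ω | t < ∑ i, θ i * Xs i ω} = {ω | ∑ i, θ i * Xs i ω ≤ t}ᶜ := by ext; simp
    rw [hX.2.2 t ht, hcompl, prob_compl_eq_one_sub (measurableSet_le hsum_meas measurable_const)]
    calc ENNReal.ofReal (t ^ (-α)) = 1 - ENNReal.ofReal (1 - t ^ (-α)) := by
          rw [← ENNReal.ofReal_one, ← ENNReal.ofReal_sub _ (sub_nonneg.2
            (Real.rpow_le_one_of_one_le_of_nonpos ht (by linarith [hα.1]))), sub_sub_cancel]
      _ ≤ 1 - P {ω | ∑ i, θ i * Xs i ω ≤ t} :=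
          tsub_le_tsub_left (measure_sum_mul_le_le hα hXs hind hθ hsum ht) 1
  intro t
  rcases le_or_gt 1 t with ht | ht
  · exact hdom t ht
  calc P {ω | t < X ω} ≤ 1 := prob_le_one
    _ = P {ω | 1 < X ω} := by simp [hX.2.2 1 le_rfl]
    _ ≤ P {ω | 1 < ∑ i, θ i * Xs i ω} := hdom 1 le_rfl
    _ ≤ P {ω | t < ∑ i, θ i * Xs i ω} := measure_mono fun ω hω => ht.trans hω
end

section
/- Let X, X₁, …, X_{mn} be iid Pareto(α) random variables with α ∈ (0,1] and m, n positive integers. Then (1/m)·∑_{i=1}^{m} Xᵢ ≤_st (1/(mn))·∑_{i=1}^{mn} Xᵢ; i.e., the equally weighted average of mn iid ultra heavy-tailed Pareto losses first-order stochastically dominates the equally weighted average of m of them. -/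
/-!
Write `U ≤st V` when `P(U > t) ≤ P(V > t)` for all `t`. Since convolution of laws is monotone
in each factor for `≤st`, the order is preserved under independent sums. Splitting the `mn`
variables into `m` blocks of `n`, the `mn`-average is the average of the `m` independent block
averages, so it suffices that one Pareto(α) variable is `≤st` the average of `n` iid copies.

For `α = 1`, the laws with tail at least `min 1 t⁻¹` are closed under independent convex
combinations: conditioning on one summand and applying the layer-cake formula reduces this to
an elementary integral. For `α < 1`, `Xᵢ ^ α` is Pareto(1), and by concavity of `x ↦ x ^ α` the
average of the `Xᵢ` is at least the `α⁻¹`-th power of the average of the `Xᵢ ^ α`.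
-/

open MeasureTheory ProbabilityTheory Set

lemma conv_Ioi_eq_lintegral (μ ν : Measure ℝ) [SFinite ν] (t : ℝ) :
    (μ ∗ ν) (Ioi t) = ∫⁻ x, ν (Ioi (t - x)) ∂μ := by
  rw [Measure.conv, Measure.map_apply measurable_add measurableSet_Ioi,
    Measure.prod_apply (measurable_add measurableSet_Ioi)]
  refine lintegral_congr fun x => congrArg ν ?_
  ext y
  simp [sub_lt_iff_lt_add']

lemma conv_Ioi_mono {μ₁ μ₂ ν₁ ν₂ : Measure ℝ} [SFinite μ₁] [SFinite μ₂] [SFinite ν₁] [SFinite ν₂]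
    (hμ : ∀ t, μ₁ (Ioi t) ≤ μ₂ (Ioi t)) (hν : ∀ t, ν₁ (Ioi t) ≤ ν₂ (Ioi t)) (t : ℝ) :
    (μ₁ ∗ ν₁) (Ioi t) ≤ (μ₂ ∗ ν₂) (Ioi t) :=
  calc (μ₁ ∗ ν₁) (Ioi t) ≤ (μ₁ ∗ ν₂) (Ioi t) := by
        simp only [conv_Ioi_eq_lintegral]; exact lintegral_mono fun x => hν _
    _ = (ν₂ ∗ μ₁) (Ioi t) := by rw [Measure.conv_comm]
    _ ≤ (ν₂ ∗ μ₂) (Ioi t) := by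
        simp only [conv_Ioi_eq_lintegral]; exact lintegral_mono fun x => hμ _
    _ = (μ₂ ∗ ν₂) (Ioi t) := by rw [Measure.conv_comm]

section RandomVariables

variable {Ω : Type*} [MeasurableSpace Ω]

lemma measure_lt_eq_map_Ioi (P : Measure Ω) {U : Ω → ℝ} (hU : Measurable U) (t : ℝ) :
    P {ω | t < U ω} = P.map U (Ioi t) := by
  rw [Measure.map_apply hU measurableSet_Ioi]
  rfl

variable {P : Measure Ω}

lemma measure_lt_add_le_of_indepFun [IsFiniteMeasure P] {U₁ V₁ U₂ V₂ : Ω → ℝ}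
    (hU₁ : Measurable U₁) (hV₁ : Measurable V₁) (hU₂ : Measurable U₂) (hV₂ : Measurable V₂)
    (h₁ : IndepFun U₁ V₁ P) (h₂ : IndepFun U₂ V₂ P)
    (hU : ∀ t, P {ω | t < U₁ ω} ≤ P {ω | t < U₂ ω})
    (hV : ∀ t, P {ω | t < V₁ ω} ≤ P {ω | t < V₂ ω}) (t : ℝ) :
    P {ω | t < U₁ ω + V₁ ω} ≤ P {ω | t < U₂ ω + V₂ ω} := by
  simp only [measure_lt_eq_map_Ioi P hU₁, measure_lt_eq_map_Ioi P hU₂, measure_lt_eq_map_Ioi P hV₁,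
    measure_lt_eq_map_Ioi P hV₂] at hU hV
  calc P {ω | t < U₁ ω + V₁ ω} = (P.map U₁ ∗ P.map V₁) (Ioi t) := by
        rw [← h₁.map_add_eq_map_conv_map hU₁ hV₁]
        exact measure_lt_eq_map_Ioi P (hU₁.add hV₁) t
    _ ≤ (P.map U₂ ∗ P.map V₂) (Ioi t) := conv_Ioi_mono hU hV t
    _ = P {ω | t < U₂ ω + V₂ ω} := by
        rw [← h₂.map_add_eq_map_conv_map hU₂ hV₂]
        exact (measure_lt_eq_map_Ioi P (hU₂.add hV₂) t).symm

lemma measure_lt_sum_range_le [IsFiniteMeasure P] {U V : ℕ → Ω → ℝ}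
    (hUm : ∀ k, Measurable (U k)) (hVm : ∀ k, Measurable (V k))
    (hU : ∀ k, IndepFun (∑ j ∈ Finset.range k, U j) (U k) P)
    (hV : ∀ k, IndepFun (∑ j ∈ Finset.range k, V j) (V k) P)
    (hUV : ∀ k t, P {ω | t < U k ω} ≤ P {ω | t < V k ω}) (m : ℕ) (t : ℝ) :
    P {ω | t < ∑ j ∈ Finset.range m, U j ω} ≤ P {ω | t < ∑ j ∈ Finset.range m, V j ω} := by
  induction m generalizing t with
  | zero => simp
  | succ k ih =>
    have h := measure_lt_add_le_of_indepFun (by fun_prop) (hUm k) (by fun_prop) (hVm k)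
      (hU k) (hV k) (by simpa only [Finset.sum_apply] using ih) (hUV k) t
    simpa only [Finset.sum_range_succ, Finset.sum_apply] using h

lemma ProbabilityTheory.iIndepFun.indepFun_finsetSum_finsetSum {ι β : Type*}
    [MeasurableSpace β] [AddCommMonoid β] [MeasurableAdd₂ β] {X : ι → Ω → β}
    (hind : iIndepFun X P) (hXm : ∀ i, Measurable (X i)) {S T : Finset ι} (hST : Disjoint S T) :
    IndepFun (∑ i ∈ S, X i) (∑ i ∈ T, X i) P := by
  have hsum : ∀ U : Finset ι,
      ∑ i ∈ U, X i = (fun v : U → β => ∑ i, v i) ∘ fun ω (i : U) => X i ω := fun U => by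
    ext ω
    simp [Finset.sum_apply, ← Finset.sum_coe_sort U]
  rw [hsum S, hsum T]
  exact (hind.indepFun_finset S T hST hXm).comp
    (Finset.measurable_sum _ fun i _ => measurable_pi_apply i)
    (Finset.measurable_sum _ fun i _ => measurable_pi_apply i)

end RandomVariables

lemma lt_inv_max_one_iff {t l r u x : ℝ} (hl : 0 < l) (hr : 0 < r) (hu : 0 < u) (hu1 : u < 1) :
    u < (max ((t - l * x) / r) 1)⁻¹ ↔ (t - r / u) / l < x := by
  have h1 : 1 < u⁻¹ := (one_lt_inv₀ hu).mpr hu1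
  rw [lt_inv_comm₀ hu (zero_lt_one.trans_le (le_max_right _ _)), max_lt_iff, div_lt_iff₀ hr,
    div_lt_iff₀ hl, ← div_eq_inv_mul]
  constructor
  · rintro ⟨h, -⟩; linarith
  · intro h; exact ⟨by linarith, h1⟩

lemma ofReal_inv_le_lintegral_inv_max {ν : Measure ℝ}
    (hν : ∀ s, ENNReal.ofReal (max s 1)⁻¹ ≤ ν (Ioi s)) {l r t : ℝ} (hl : 0 < l) (hr : 0 < r)
    (hlr : l + r = 1) (ht : 1 ≤ t) :
    ENNReal.ofReal t⁻¹ ≤ ∫⁻ x, ENNReal.ofReal (max ((t - l * x) / r) 1)⁻¹ ∂ν := by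
  set f : ℝ → ℝ := fun x => (max ((t - l * x) / r) 1)⁻¹
  have hf : Measurable f := by fun_prop
  rw [lintegral_eq_lintegral_meas_lt ν (ae_of_all _ fun x => by positivity) hf.aemeasurable]
  have level : ∀ u ∈ Ioo (0 : ℝ) 1,
      ENNReal.ofReal (max ((t - r / u) / l) 1)⁻¹ ≤ ν {x | u < f x} := by
    rintro u ⟨hu0, hu1⟩
    have hset : {x | u < f x} = Ioi ((t - r / u) / l) := by
      ext x
      exact lt_inv_max_one_iff hl hr hu0 hu1
    rw [hset]
    exact hν _
  have htl : 0 < t - l := by linarith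
  set u₀ := r / (t - l)
  have hu₀ : 0 < u₀ := div_pos hr htl
  have hu₀1 : u₀ ≤ 1 := by rw [div_le_one htl]; linarith
  have near : ∀ u ∈ Ioo 0 u₀, 1 ≤ ν {x | u < f x} := by
    rintro u ⟨hu0, hu⟩
    refine le_trans ?_ (level u ⟨hu0, hu.trans_le hu₀1⟩)
    have : t - l < r / u := by rwa [lt_div_iff₀ htl, mul_comm, ← lt_div_iff₀ hu0] at hu
    rw [max_eq_right (by rw [div_le_one hl]; linarith), inv_one, ENNReal.ofReal_one]
  have far : ∀ u ∈ Ioo u₀ 1, ENNReal.ofReal (l / t) ≤ ν {x | u < f x} := by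
    rintro u ⟨hu, hu1⟩
    have hu0 : 0 < u := hu₀.trans hu
    refine le_trans (ENNReal.ofReal_le_ofReal ?_) (level u ⟨hu0, hu1⟩)
    have : r / u < t - l := by rwa [div_lt_iff₀ htl, mul_comm, ← div_lt_iff₀ hu0] at hu
    rw [max_eq_left (by rw [le_div_iff₀ hl]; linarith), inv_div]
    exact div_le_div_of_nonneg_left hl.le (by linarith) (by linarith [div_pos hr hu0])
  have hdisj : Disjoint (Ioo 0 u₀) (Ioo u₀ 1) :=
    disjoint_left.mpr fun u hu hu' => lt_asymm hu.2 hu'.1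
  -- `u₀` is where `(t - r / u) / l` crosses `1`: the bounds `1` below it and `l / t` above it
  -- integrate to exactly `1 / t`.
  calc ENNReal.ofReal t⁻¹ = 1 * volume (Ioo 0 u₀) + ENNReal.ofReal (l / t) * volume (Ioo u₀ 1) := by
        rw [Real.volume_Ioo, Real.volume_Ioo, one_mul, ← ENNReal.ofReal_mul (by positivity),
          ← ENNReal.ofReal_add (by linarith) (by have := sub_nonneg.2 hu₀1; positivity)]
        congr 1
        have : u₀ * (t - l) = r := div_mul_cancel₀ r htl.ne'
        field_simp
        linarith
    _ = (∫⁻ _ in Ioo 0 u₀, 1) + ∫⁻ _ in Ioo u₀ 1, ENNReal.ofReal (l / t) := by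
        rw [setLIntegral_const, setLIntegral_const]
    _ ≤ (∫⁻ u in Ioo 0 u₀, ν {x | u < f x}) + ∫⁻ u in Ioo u₀ 1, ν {x | u < f x} :=
        add_le_add (setLIntegral_mono' measurableSet_Ioo near)
          (setLIntegral_mono' measurableSet_Ioo far)
    _ = ∫⁻ u in Ioo 0 u₀ ∪ Ioo u₀ 1, ν {x | u < f x} :=
        (lintegral_union measurableSet_Ioo hdisj).symm
    _ ≤ ∫⁻ u in Ioi 0, ν {x | u < f x} :=
        lintegral_mono_set (union_subset Ioo_subset_Ioi_self
          (Ioo_subset_Ioi_self.trans (Ioi_subset_Ioi hu₀.le)))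

lemma ofReal_inv_le_prod_convexComb {ν₁ ν₂ : Measure ℝ} [SFinite ν₂]
    (h₁ : ∀ s, ENNReal.ofReal (max s 1)⁻¹ ≤ ν₁ (Ioi s))
    (h₂ : ∀ s, ENNReal.ofReal (max s 1)⁻¹ ≤ ν₂ (Ioi s)) {l r t : ℝ} (hl : 0 < l) (hr : 0 < r)
    (hlr : l + r = 1) (ht : 1 ≤ t) :
    ENNReal.ofReal t⁻¹ ≤ (ν₁.prod ν₂) {p : ℝ × ℝ | t < l * p.1 + r * p.2} := by
  rw [Measure.prod_apply (measurableSet_lt measurable_const (by fun_prop))]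
  refine (ofReal_inv_le_lintegral_inv_max h₁ hl hr hlr ht).trans (lintegral_mono fun x => ?_)
  have hslice : Prod.mk x ⁻¹' {p : ℝ × ℝ | t < l * p.1 + r * p.2} = Ioi ((t - l * x) / r) := by
    ext y
    simp only [mem_preimage, mem_ofPred_eq, mem_Ioi, div_lt_iff₀ hr]
    constructor <;> intro <;> linarith
  rw [hslice]
  exact h₂ _

section Pareto

variable {Ω : Type*} [MeasurableSpace Ω] {P : Measure Ω}

def DominatesPareto (P : Measure Ω) (X : Ω → ℝ) (α : ℝ) : Prop :=
  ∀ s : ℝ, ENNReal.ofReal (max s 1 ^ (-α)) ≤ P {ω | s < X ω}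

lemma dominatesPareto_of_forall_one_le {X : Ω → ℝ} {α : ℝ}
    (h : ∀ s, 1 ≤ s → ENNReal.ofReal (s ^ (-α)) ≤ P {ω | s < X ω}) : DominatesPareto P X α :=
  fun s => (h _ (le_max_right s 1)).trans (measure_mono fun _ hω => (le_max_left s 1).trans_lt hω)

lemma IsPareto.measure_lt_le [IsProbabilityMeasure P] {X : Ω → ℝ} {α : ℝ} (hX : IsPareto P X α)
    (s : ℝ) : P {ω | s < X ω} ≤ ENNReal.ofReal (max s 1 ^ (-α)) := by
  rcases le_total 1 s with hs | hs
  · rw [max_eq_left hs, hX.2.2 s hs]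
  · rw [max_eq_right hs, Real.one_rpow, ENNReal.ofReal_one]
    exact prob_le_one

lemma DominatesPareto.convexComb [IsFiniteMeasure P] {U V : Ω → ℝ} (hU : Measurable U)
    (hV : Measurable V) (hUV : IndepFun U V P) (hUp : DominatesPareto P U 1)
    (hVp : DominatesPareto P V 1) {l r : ℝ} (hl : 0 < l) (hr : 0 < r) (hlr : l + r = 1) :
    DominatesPareto P (fun ω => l * U ω + r * V ω) 1 := by
  have hmap : ∀ {W : Ω → ℝ}, Measurable W → DominatesPareto P W 1 →
      ∀ s, ENNReal.ofReal (max s 1)⁻¹ ≤ P.map W (Ioi s) := fun hW hWp s => by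
    simpa only [Real.rpow_neg_one, measure_lt_eq_map_Ioi P hW] using hWp s
  refine dominatesPareto_of_forall_one_le fun t ht => ?_
  have hS : MeasurableSet {p : ℝ × ℝ | t < l * p.1 + r * p.2} :=
    measurableSet_lt measurable_const (by fun_prop)
  have hprod : P {ω | t < l * U ω + r * V ω}
      = (P.map U).prod (P.map V) {p : ℝ × ℝ | t < l * p.1 + r * p.2} := by
    rw [← (indepFun_iff_map_prod_eq_prod_map_map hU.aemeasurable hV.aemeasurable).mp hUV,
      Measure.map_apply (hU.prodMk hV) hS]
    rfl
  rw [Real.rpow_neg_one, hprod]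
  exact ofReal_inv_le_prod_convexComb (hmap hU hUp) (hmap hV hVp) hl hr hlr ht

lemma DominatesPareto.avg [IsFiniteMeasure P] {ι : Type*} {Z : ι → Ω → ℝ}
    (hZm : ∀ i, Measurable (Z i)) (hind : iIndepFun Z P) (hZ : ∀ i, DominatesPareto P (Z i) 1)
    {s : Finset ι} (hs : s.Nonempty) :
    DominatesPareto P (fun ω => (∑ i ∈ s, Z i ω) / s.card) 1 := by
  induction hs using Finset.Nonempty.cons_induction with
  | singleton a => simpa using hZ a
  | cons a s ha _ ih =>
    have hindep : IndepFun (Z a) (fun ω => (∑ i ∈ s, Z i ω) / s.card) P := by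
      have h := (hind.indepFun_finsetSum_of_notMem hZm ha).symm.comp measurable_id
        (measurable_id.div_const (s.card : ℝ))
      simpa only [Function.comp_def, Finset.sum_apply, id] using h
    have hcomb := DominatesPareto.convexComb (hZm a) (by fun_prop) hindep (hZ a) ih
      (l := 1 / (s.card + 1)) (r := s.card / (s.card + 1)) (by positivity) (by positivity)
      (by field_simp; ring)
    convert hcomb using 2 with ω
    rw [Finset.sum_cons, Finset.card_cons]
    push_cast
    field_simp

lemma IsPareto.ae_one_le_s5 [IsProbabilityMeasure P] {X : Ω → ℝ} {α : ℝ} (hX : IsPareto P X α) :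
    ∀ᵐ ω ∂P, 1 ≤ X ω :=
  (ae_iff_measure_eq (measurableSet_le measurable_const hX.1).nullMeasurableSet).mpr
    (by rw [measure_univ, hX.2.1])

lemma IsPareto.dominatesPareto_one_rpow {X : Ω → ℝ} {α : ℝ} (hX : IsPareto P X α) (hα : 0 < α) :
    DominatesPareto P (fun ω => max (X ω) 1 ^ α) 1 := by
  refine dominatesPareto_of_forall_one_le fun u hu => ?_
  have hu' : 1 ≤ u ^ α⁻¹ := Real.one_le_rpow hu (by positivity)
  have hset : {ω | u < max (X ω) 1 ^ α} = {ω | u ^ α⁻¹ < X ω} := by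
    ext ω
    rw [mem_ofPred_eq, mem_ofPred_eq, ← Real.rpow_inv_lt_iff_of_pos (by linarith)
      (zero_le_one.trans (le_max_right _ _)) hα, lt_max_iff, or_iff_left hu'.not_gt]
  rw [hset, hX.2.2 _ hu', ← Real.rpow_mul (by linarith), inv_mul_eq_div, neg_div, div_self hα.ne']

lemma IsPareto.dominatesPareto_avg [IsProbabilityMeasure P] {ι : Type*} {α : ℝ}
    (hα : α ∈ Ioc (0 : ℝ) 1) {X : ι → Ω → ℝ} (hX : ∀ i, IsPareto P (X i) α)
    (hind : iIndepFun X P) {s : Finset ι} (hs : s.Nonempty) :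
    DominatesPareto P (fun ω => (∑ i ∈ s, X i ω) / s.card) α := by
  obtain ⟨hα0, hα1⟩ := hα
  have hk : (0 : ℝ) < s.card := by exact_mod_cast hs.card_pos
  set Y : ι → Ω → ℝ := fun i ω => max (X i ω) 1
  have hZavg := DominatesPareto.avg (fun i => ((hX i).1.max measurable_const).pow_const α)
    (hind.comp (fun _ x => max x 1 ^ α) fun _ => by fun_prop)
    (fun i => (hX i).dominatesPareto_one_rpow hα0) hs
  have hmean : ∀ ω, (∑ i ∈ s, Y i ω ^ α) / s.card ≤ ((∑ i ∈ s, Y i ω) / s.card) ^ α := by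
    intro ω
    have h := (Real.concaveOn_rpow hα0.le hα1).le_map_sum (t := s) (w := fun _ => (s.card : ℝ)⁻¹)
      (p := fun i => Y i ω) (fun _ _ => by positivity) (by simp [hk.ne'])
      (fun i _ => mem_Ici.mpr (zero_le_one.trans (le_max_right _ _)))
    simpa only [smul_eq_mul, inv_mul_eq_div, ← Finset.sum_div] using h
  have hXY : ∀ᵐ ω ∂P, ∑ i ∈ s, X i ω = ∑ i ∈ s, Y i ω := by
    filter_upwards [(ae_ball_iff s.countable_toSet).mpr fun i _ => (hX i).ae_one_le_s5] with ω hω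
    exact Finset.sum_congr rfl fun i hi => (max_eq_left (hω i hi)).symm
  refine dominatesPareto_of_forall_one_le fun w hw => ?_
  calc ENNReal.ofReal (w ^ (-α)) = ENNReal.ofReal (max (w ^ α) 1 ^ (-1 : ℝ)) := by
        rw [max_eq_left (Real.one_le_rpow hw hα0.le), ← Real.rpow_mul (by linarith), mul_neg_one]
    _ ≤ P {ω | w ^ α < (∑ i ∈ s, Y i ω ^ α) / s.card} := hZavg _
    _ ≤ P {ω | w < (∑ i ∈ s, Y i ω) / s.card} := measure_mono fun ω hω =>
        (Real.rpow_lt_rpow_iff (by linarith) (by positivity) hα0).mp (hω.trans_le (hmean ω))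
    _ = P {ω | w < (∑ i ∈ s, X i ω) / s.card} :=
        measure_congr <| Filter.eventuallyEq_set.mpr <|
          hXY.mono fun ω hω => by simp only [mem_ofPred_eq, hω]

end Pareto

section Blocks

variable {Ω : Type*}

noncomputable def blockAvg (X : ℕ → Ω → ℝ) (n k : ℕ) (ω : Ω) : ℝ :=
  (∑ i ∈ Finset.Ico (k * n) (k * n + n), X i ω) / n

lemma sum_range_blockAvg (X : ℕ → Ω → ℝ) (n k : ℕ) (ω : Ω) :
    ∑ j ∈ Finset.range k, blockAvg X n j ω = (∑ i ∈ Finset.range (k * n), X i ω) / n := by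
  induction k with
  | zero => simp
  | succ k ih =>
    rw [Finset.sum_range_succ, ih, blockAvg, ← add_div,
      Finset.sum_range_add_sum_Ico _ (Nat.le_add_right _ _), Nat.succ_mul]

variable [MeasurableSpace Ω] {P : Measure Ω}

lemma measurable_blockAvg {X : ℕ → Ω → ℝ} (hXm : ∀ i, Measurable (X i)) (n k : ℕ) :
    Measurable (blockAvg X n k) := by
  unfold blockAvg
  fun_prop

lemma indepFun_sum_range_blockAvg {X : ℕ → Ω → ℝ} (hind : iIndepFun X P)
    (hXm : ∀ i, Measurable (X i)) (n k : ℕ) :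
    IndepFun (∑ j ∈ Finset.range k, blockAvg X n j) (blockAvg X n k) P := by
  have hdisj : Disjoint (Finset.range (k * n)) (Finset.Ico (k * n) (k * n + n)) := by
    rw [Finset.range_eq_Ico]
    exact Finset.Ico_disjoint_Ico_consecutive _ _ _
  have h := (hind.indepFun_finsetSum_finsetSum hXm hdisj).comp
    (measurable_id.div_const (n : ℝ)) (measurable_id.div_const (n : ℝ))
  convert h using 1
  · ext ω
    simp [Finset.sum_apply, sum_range_blockAvg]
  · ext ω
    simp [blockAvg, Finset.sum_apply]

end Blocks

/-- For iid Pareto(α), `α ∈ (0,1]`, and positive integers `m, n`, the average of `m`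
of the losses is first-order stochastically dominated by the average of `mn` of them. -/
theorem stmt5 {Ω : Type*} [MeasurableSpace Ω] (P : Measure Ω) [IsProbabilityMeasure P]
    (α : ℝ) (hα : α ∈ Set.Ioc (0:ℝ) 1) (m n : ℕ) (hm : 0 < m) (hn : 0 < n)
    (X : ℕ → Ω → ℝ) (hX : ∀ i, IsPareto P (X i) α)
    (hind : iIndepFun X P) :
    ∀ t : ℝ, P {ω | t < (∑ i ∈ Finset.range m, X i ω) / (m : ℝ)}
      ≤ P {ω | t < (∑ i ∈ Finset.range (m * n), X i ω) / ((m : ℝ) * (n : ℝ))} := by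
  intro t
  have hXm : ∀ i, Measurable (X i) := fun i => (hX i).1
  have hXB : ∀ k s, P {ω | s < X k ω} ≤ P {ω | s < blockAvg X n k ω} := fun k s => by
    have hblock := IsPareto.dominatesPareto_avg hα hX hind
      (s := Finset.Ico (k * n) (k * n + n)) (by simp [hn]) s
    simp only [Nat.card_Ico, add_tsub_cancel_left] at hblock
    exact ((hX k).measure_lt_le s).trans hblock
  have key := measure_lt_sum_range_le hXm (measurable_blockAvg hXm n)
    (fun k => hind.indepFun_finsetSum_of_notMem hXm Finset.notMem_range_self)
    (indepFun_sum_range_blockAvg hind hXm n) hXB m (t * m)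
  have hmR : (0 : ℝ) < m := by exact_mod_cast hm
  have hnR : (0 : ℝ) < n := by exact_mod_cast hn
  convert key using 2 <;> ext ω <;> simp only [mem_ofPred_eq, sum_range_blockAvg]
  · rw [lt_div_iff₀ hmR]
  · rw [lt_div_iff₀ (by positivity), lt_div_iff₀ hnR, mul_assoc]
end

section
/- Let X₁,…,Xₙ be identically distributed integrable random variables (with arbitrary dependence) and θ₁,…,θₙ > 0 with ∑ᵢθᵢ = 1. If X₁ ≤_st θ₁X₁ + ⋯ + θₙXₙ, then X₁ = X₂ = ⋯ = Xₙ almost surely. -/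
/-!
Take `φ x = exp (arsinh x) = x + √(1 + x²)`: it is positive, increasing, strictly convex and of
linear growth, so `φ (Xᵢ)` is integrable. Stochastic dominance and the layer-cake formula give
`𝔼 φ(X₁) ≤ 𝔼 φ(∑ θᵢ Xᵢ)`; Jensen gives `φ(∑ θᵢ Xᵢ) ≤ ∑ θᵢ φ(Xᵢ)` pointwise, and the right-hand
side has expectation `𝔼 φ(X₁)` because the `Xᵢ` are identically distributed. Hence Jensen's
inequality is an equality almost surely, which by strict convexity forces the `Xᵢ` to coincide.
-/

open MeasureTheory ProbabilityTheory Set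

namespace Real

theorem strictConvexOn_sqrt_one_add_sq : StrictConvexOn ℝ univ fun x : ℝ => √(1 + x ^ 2) := by
  refine ⟨convex_univ, fun x _ y _ hxy a b ha hb hab => ?_⟩
  simp only [smul_eq_mul]
  have hu := sq_sqrt (show 0 ≤ 1 + x ^ 2 by positivity)
  have hv := sq_sqrt (show 0 ≤ 1 + y ^ 2 by positivity)
  -- strict Cauchy–Schwarz for the vectors `(1, x)` and `(1, y)`
  have hcs : 1 + x * y < √(1 + x ^ 2) * √(1 + y ^ 2) := by
    rw [← sqrt_mul (by positivity)]
    refine lt_sqrt_of_sq_lt ?_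
    nlinarith [sq_pos_of_ne_zero (sub_ne_zero.mpr hxy)]
  obtain rfl : b = 1 - a := by linarith
  have hexpand :
      (a * √(1 + x ^ 2) + (1 - a) * √(1 + y ^ 2)) ^ 2 - (1 + (a * x + (1 - a) * y) ^ 2)
        = 2 * a * (1 - a) * (√(1 + x ^ 2) * √(1 + y ^ 2) - (1 + x * y)) := by
    linear_combination a ^ 2 * hu + (1 - a) ^ 2 * hv
  rw [sqrt_lt' (by positivity)]
  linarith [mul_pos (mul_pos ha hb) (sub_pos.mpr hcs)]

theorem strictConvexOn_exp_arsinh : StrictConvexOn ℝ univ fun x => exp (arsinh x) := by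
  simp only [exp_arsinh]
  exact (convexOn_id convex_univ).add_strictConvexOn strictConvexOn_sqrt_one_add_sq

theorem continuous_exp_arsinh : Continuous fun x => exp (arsinh x) :=
  continuous_exp.comp continuous_arsinh

theorem exp_arsinh_le (x : ℝ) : exp (arsinh x) ≤ 1 + 2 * |x| := by
  have : √(1 + x ^ 2) ≤ 1 + |x| := by
    rw [sqrt_le_iff]
    constructor
    · positivity
    · nlinarith [sq_abs x, abs_nonneg x]
  rw [exp_arsinh]
  linarith [le_abs_self x]

theorem preimage_exp_arsinh_Ioi {t : ℝ} (ht : 0 < t) :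
    (fun x => exp (arsinh x)) ⁻¹' Ioi t = Ioi (sinh (log t)) := by
  ext x
  rw [mem_preimage, mem_Ioi, mem_Ioi, ← log_lt_iff_lt_exp ht, ← sinh_lt_sinh, sinh_arsinh]

end Real

open Real

section

variable {Ω : Type*} [MeasurableSpace Ω] {P : Measure Ω}

theorem measure_lt_le_of_measure_le_le [IsFiniteMeasure P] {X Y : Ω → ℝ}
    (hX : AEMeasurable X P) (hY : AEMeasurable Y P)
    (hcdf : ∀ x, P {ω | Y ω ≤ x} ≤ P {ω | X ω ≤ x}) (x : ℝ) :
    P {ω | x < X ω} ≤ P {ω | x < Y ω} := by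
  simp only [← not_le, ← compl_ofPred]
  rw [measure_compl₀ (nullMeasurableSet_le hX aemeasurable_const) (measure_ne_top _ _),
    measure_compl₀ (nullMeasurableSet_le hY aemeasurable_const) (measure_ne_top _ _)]
  exact tsub_le_tsub_left (hcdf x) _

theorem integral_comp_le_of_measure_lt_le {X Y : Ω → ℝ} {g : ℝ → ℝ} (hg : Measurable g)
    (hg₀ : ∀ x, 0 ≤ g x) (hlevel : ∀ t, 0 < t → ∃ a, g ⁻¹' Ioi t = Ioi a)
    (hX : AEMeasurable X P) (hgY : Integrable (fun ω => g (Y ω)) P)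
    (htail : ∀ x, P {ω | x < X ω} ≤ P {ω | x < Y ω}) :
    ∫ ω, g (X ω) ∂P ≤ ∫ ω, g (Y ω) ∂P := by
  have hgX : AEMeasurable (fun ω => g (X ω)) P := hg.comp_aemeasurable hX
  have hgX₀ : 0 ≤ᵐ[P] fun ω => g (X ω) := ae_of_all _ fun ω => hg₀ _
  have hgY₀ : 0 ≤ᵐ[P] fun ω => g (Y ω) := ae_of_all _ fun ω => hg₀ _
  rw [integral_eq_lintegral_of_nonneg_ae hgX₀ hgX.aestronglyMeasurable,
    integral_eq_lintegral_of_nonneg_ae hgY₀ hgY.aestronglyMeasurable]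
  refine ENNReal.toReal_mono hgY.lintegral_lt_top.ne ?_
  rw [lintegral_eq_lintegral_meas_lt P hgX₀ hgX,
    lintegral_eq_lintegral_meas_lt P hgY₀ hgY.aemeasurable]
  refine setLIntegral_mono' measurableSet_Ioi fun t ht => ?_
  obtain ⟨a, ha⟩ := hlevel t ht
  change P (X ⁻¹' (g ⁻¹' Ioi t)) ≤ P (Y ⁻¹' (g ⁻¹' Ioi t))
  rw [ha]
  exact htail a

theorem MeasureTheory.Integrable.exp_arsinh_comp [IsFiniteMeasure P] {X : Ω → ℝ}
    (hX : Integrable X P) : Integrable (fun ω => exp (arsinh (X ω))) P := by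
  refine ((integrable_const 1).add (hX.abs.const_mul 2)).mono'
    (continuous_exp_arsinh.comp_aestronglyMeasurable hX.1) (ae_of_all _ fun ω => ?_)
  rw [norm_of_nonneg (exp_pos _).le]
  exact exp_arsinh_le _

theorem StrictConvexOn.ae_eq_of_integral_map_sum_le {ι : Type*} [Fintype ι] {φ : ℝ → ℝ}
    (hφ : StrictConvexOn ℝ univ φ) {θ : ι → ℝ} (hθ : ∀ i, 0 < θ i) (hsum : ∑ i, θ i = 1)
    {X : ι → Ω → ℝ} (hint : ∀ i, Integrable (fun ω => φ (X i ω)) P)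
    (hintS : Integrable (fun ω => φ (∑ i, θ i * X i ω)) P)
    (hle : ∫ ω, ∑ i, θ i * φ (X i ω) ∂P ≤ ∫ ω, φ (∑ i, θ i * X i ω) ∂P) :
    ∀ᵐ ω ∂P, ∀ i j, X i ω = X j ω := by
  have hjensen : ∀ ω, φ (∑ i, θ i * X i ω) ≤ ∑ i, θ i * φ (X i ω) := fun ω => by
    simpa only [smul_eq_mul] using hφ.convexOn.map_sum_le (fun i _ => (hθ i).le) hsum
      (fun i _ => mem_univ (X i ω))
  have hintsum : Integrable (fun ω => ∑ i, θ i * φ (X i ω)) P :=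
    integrable_finsetSum _ fun i _ => (hint i).const_mul _
  have hae := (integral_eq_iff_of_ae_le hintS hintsum (ae_of_all _ hjensen)).1
    (le_antisymm (integral_mono hintS hintsum hjensen) hle)
  filter_upwards [hae] with ω hω i j
  exact hφ.eq_of_le_map_sum (fun k _ => hθ k) hsum (fun k _ => mem_univ _)
    (by simpa only [smul_eq_mul] using hω.ge) (Finset.mem_univ i) (Finset.mem_univ j)

end

/-- For identically distributed integrable random variables (arbitrary dependence) and
strictly positive weights summing to 1, if `X₁ ≤_st ∑ θᵢ Xᵢ` then `X₁ = ⋯ = Xₙ` a.s. -/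
theorem stmt6 {Ω : Type*} [MeasurableSpace Ω] (P : Measure Ω) [IsProbabilityMeasure P]
    (n : ℕ) (hn : 2 ≤ n) (X : Fin n → Ω → ℝ)
    (hint : ∀ i, Integrable (X i) P)
    (hident : ∀ i j, Measure.map (X i) P = Measure.map (X j) P)
    (θ : Fin n → ℝ) (hθ : ∀ i, 0 < θ i) (hsum : ∑ i, θ i = 1)
    (hdom : ∀ x : ℝ, P {ω | ∑ i, θ i * X i ω ≤ x} ≤ P {ω | X ⟨0, by omega⟩ ω ≤ x}) :
    ∀ i j, X i =ᵐ[P] X j := by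
  set X₀ := X ⟨0, by omega⟩
  have hS : Integrable (fun ω => ∑ i, θ i * X i ω) P :=
    integrable_finsetSum _ fun i _ => (hint i).const_mul _
  have hdom_exp : ∫ ω, exp (arsinh (X₀ ω)) ∂P ≤ ∫ ω, exp (arsinh (∑ i, θ i * X i ω)) ∂P :=
    integral_comp_le_of_measure_lt_le (g := fun x => exp (arsinh x))
      continuous_exp_arsinh.measurable (fun _ => (exp_pos _).le)
      (fun _ ht => ⟨_, preimage_exp_arsinh_Ioi ht⟩) (hint _).aemeasurable hS.exp_arsinh_comp
      (measure_lt_le_of_measure_le_le (hint _).aemeasurable hS.aemeasurable hdom)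
  have hmix : ∫ ω, ∑ i, θ i * exp (arsinh (X i ω)) ∂P = ∫ ω, exp (arsinh (X₀ ω)) ∂P := by
    have hlaw : ∀ i, ∫ ω, exp (arsinh (X i ω)) ∂P = ∫ ω, exp (arsinh (X₀ ω)) ∂P := fun i =>
      (IdentDistrib.comp ⟨(hint i).aemeasurable, (hint _).aemeasurable, hident _ _⟩
        continuous_exp_arsinh.measurable).integral_eq
    rw [integral_finsetSum _ fun i _ => (hint i).exp_arsinh_comp.const_mul _]
    simp only [integral_const_mul, hlaw]
    rw [← Finset.sum_mul, hsum, one_mul]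
  have hae := strictConvexOn_exp_arsinh.ae_eq_of_integral_map_sum_le hθ hsum
    (fun i => (hint i).exp_arsinh_comp) hS.exp_arsinh_comp (hmix ▸ hdom_exp)
  intro i j
  filter_upwards [hae] with ω hω using hω i j
end

section
/- Let X, X₁, …, Xₙ be iid Pareto(α) with α ∈ (0,1], (θ₁,…,θₙ) in the simplex, and m ≥ 1 a real number. Then max(X, m) ≤_st ∑ᵢ θᵢ · max(Xᵢ, m), and (X − m)₊ ≤_st ∑ᵢ θᵢ · (Xᵢ − m)₊. -/
open MeasureTheory ProbabilityTheory Set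

section Scalar

open Real

variable {α v : ℝ}

noncomputable def paretoCdf (α t : ℝ) : ℝ := 1 - t ^ (-α)

lemma paretoCdf_pos (hα0 : 0 < α) {t : ℝ} (ht : 1 < t) : 0 < paretoCdf α t :=
  sub_pos.mpr (rpow_lt_one_of_one_lt_of_neg ht (neg_lt_zero.mpr hα0))

lemma paretoCdf_one : paretoCdf α 1 = 0 := by simp [paretoCdf]

lemma paretoCdf_le_paretoCdf (hα0 : 0 < α) {s t : ℝ} (hs : 0 < s) (hst : s ≤ t) :
    paretoCdf α s ≤ paretoCdf α t :=
  sub_le_sub_left (rpow_le_rpow_of_nonpos hs hst (neg_nonpos.mpr hα0.le)) 1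

lemma paretoCdf_nonneg (hα0 : 0 < α) {t : ℝ} (ht : 1 ≤ t) : 0 ≤ paretoCdf α t :=
  paretoCdf_one (α := α) ▸ paretoCdf_le_paretoCdf hα0 one_pos ht

lemma rpow_add_rpow_one_add_le (hα0 : 0 < α) (hα1 : α ≤ 1) {c : ℝ} (hc0 : 0 ≤ c) (hc1 : c ≤ 1) :
    c ^ α + c ^ (1 + α) ≤ (1 - α) + (1 + α) * c := by
  have amgm : c ^ α ≤ α * c + (1 - α) := by
    simpa using geom_mean_le_arith_mean2_weighted hα0.le (by linarith) hc0 zero_le_one (by ring)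
  have hpow : c ^ (1 + α) ≤ c := by
    rw [rpow_add' hc0 (by linarith), rpow_one]
    exact mul_le_of_le_one_right hc0 (rpow_le_one hc0 hc1 hα0.le)
  linarith

/-- `x ↦ log (1 - (x / (x + v)) ^ α)` has derivative `-α v / logCdfDenom α v x`. -/
noncomputable def logCdfDenom (α v x : ℝ) : ℝ :=
  x ^ (1 - α) * (x + v) ^ (1 + α) - x * (x + v)

lemma hasDerivAt_logCdfDenom {x : ℝ} (hx : 0 < x) (hxv : 0 < x + v) :
    HasDerivAt (logCdfDenom α v)
      ((1 - α) * (x ^ (-α) * (x + v) ^ (1 + α)) + (1 + α) * (x ^ (1 - α) * (x + v) ^ α)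
        - (2 * x + v)) x := by
  have hadd : HasDerivAt (fun y : ℝ => y + v) 1 x := (hasDerivAt_id x).add_const v
  have hprod := ((hasDerivAt_rpow_const (p := 1 - α) (Or.inl hx.ne')).mul
    (hadd.rpow_const (p := 1 + α) (Or.inl hxv.ne'))).sub ((hasDerivAt_id x).mul hadd)
  refine hprod.congr_deriv ?_
  rw [show (1 - α - 1 : ℝ) = -α by ring, show (1 + α - 1 : ℝ) = α by ring, id]
  ring

lemma logCdfDenom_eq {x : ℝ} (hx : 0 < x) (hxv : 0 < x + v) :
    logCdfDenom α v x = x * (x + v) * ((x + v) ^ α / x ^ α) - x * (x + v) := by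
  have hA : 0 < x ^ α := rpow_pos_of_pos hx α
  rw [logCdfDenom, rpow_sub hx, rpow_one, rpow_add hxv, rpow_one]
  field_simp

lemma logCdfDenom_pos (hα0 : 0 < α) (hv : 0 < v) {x : ℝ} (hx : 0 < x) :
    0 < logCdfDenom α v x := by
  have hxv : 0 < x + v := by linarith
  have hratio : 1 < (x + v) ^ α / x ^ α :=
    (one_lt_div (rpow_pos_of_pos hx α)).mpr (rpow_lt_rpow hx.le (by linarith) hα0)
  rw [logCdfDenom_eq hx hxv]
  nlinarith [mul_pos hx hxv]

/-- With `c = x / (x + v)`, the claim is `rpow_add_rpow_one_add_le` multiplied by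
`(x + v) ^ (1 + α) / x ^ α`. -/
lemma deriv_logCdfDenom_nonneg (hα0 : 0 < α) (hα1 : α ≤ 1) (hv : 0 < v) {x : ℝ} (hx : 0 < x) :
    0 ≤ (1 - α) * (x ^ (-α) * (x + v) ^ (1 + α)) + (1 + α) * (x ^ (1 - α) * (x + v) ^ α)
        - (2 * x + v) := by
  have hxv : 0 < x + v := by linarith
  set A := x ^ α
  set B := (x + v) ^ α
  have hA : 0 < A := rpow_pos_of_pos hx α
  have hB : 0 < B := rpow_pos_of_pos hxv α
  set c := x / (x + v) with hc
  have hc0 : 0 < c := div_pos hx hxv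
  have hcα : c ^ α = A / B := div_rpow hx.le hxv.le α
  have key := rpow_add_rpow_one_add_le hα0 hα1 hc0.le ((div_le_one hxv).mpr (by linarith))
  rw [rpow_add hc0, rpow_one, hcα] at key
  have main : (2 * x + v) * A ≤ (1 - α) * ((x + v) * B) + (1 + α) * (x * B) := by
    calc (2 * x + v) * A = (A / B + c * (A / B)) * (B * (x + v)) := by
          rw [hc]; field_simp; ring
      _ ≤ ((1 - α) + (1 + α) * c) * (B * (x + v)) := by gcongr
      _ = (1 - α) * ((x + v) * B) + (1 + α) * (x * B) := by rw [hc]; field_simp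
  rw [rpow_neg hx.le, rpow_sub hx, rpow_one, rpow_add hxv, rpow_one, sub_nonneg]
  have hE : (1 - α) * (A⁻¹ * ((x + v) * B)) + (1 + α) * (x / A * B)
      = ((1 - α) * ((x + v) * B) + (1 + α) * (x * B)) / A := by field_simp
  rw [hE, le_div_iff₀ hA]
  exact main

lemma monotoneOn_logCdfDenom (hα0 : 0 < α) (hα1 : α ≤ 1) (hv : 0 < v) :
    MonotoneOn (logCdfDenom α v) (Ioi 0) := by
  have hderiv : ∀ x ∈ Ioi (0 : ℝ), HasDerivAt (logCdfDenom α v) _ x := fun x hx =>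
    hasDerivAt_logCdfDenom (α := α) hx (by linarith [mem_Ioi.mp hx])
  refine monotoneOn_of_deriv_nonneg (convex_Ioi 0)
    (fun x hx => (hderiv x hx).continuousAt.continuousWithinAt) ?_ ?_
  · rw [interior_Ioi]
    exact fun x hx => (hderiv x hx).differentiableAt.differentiableWithinAt
  · rw [interior_Ioi]
    intro x hx
    rw [(hderiv x hx).deriv]
    exact deriv_logCdfDenom_nonneg hα0 hα1 hv hx

/-- `log (paretoCdf α (1 + v / x))`, written so as to be continuous at `x = 0`. -/
noncomputable def paretoLogCdf (α v x : ℝ) : ℝ := log (1 - (x / (x + v)) ^ α)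

lemma paretoLogCdf_eq (hv : 0 ≤ v) {x : ℝ} (hx : 0 < x) :
    paretoLogCdf α v x = log (paretoCdf α (1 + v / x)) := by
  rw [paretoLogCdf, paretoCdf, show 1 + v / x = ((x + v) / x) by field_simp,
    rpow_neg (by positivity), ← inv_rpow (by positivity), inv_div]

lemma rpow_div_add_lt_one (hα0 : 0 < α) (hv : 0 < v) {x : ℝ} (hx : 0 ≤ x) :
    (x / (x + v)) ^ α < 1 :=
  rpow_lt_one (by positivity) ((div_lt_one (by linarith)).mpr (by linarith)) hα0

lemma hasDerivAt_paretoLogCdf (hα0 : 0 < α) (hv : 0 < v) {x : ℝ} (hx : 0 < x) :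
    HasDerivAt (paretoLogCdf α v) (-(α * v) / logCdfDenom α v x) x := by
  have hxv : 0 < x + v := by linarith
  have hc0 : 0 < x / (x + v) := div_pos hx hxv
  have hq1 := rpow_div_add_lt_one hα0 hv hx.le
  have hratio : HasDerivAt (fun y : ℝ => y / (y + v)) (v / (x + v) ^ 2) x := by
    refine ((hasDerivAt_id x).div ((hasDerivAt_id x).add_const v) hxv.ne').congr_deriv ?_
    simp only [id]
    field_simp
    ring
  have hlog := ((hratio.rpow_const (p := α) (Or.inl hc0.ne')).const_sub 1).log
    (sub_pos.mpr hq1).ne'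
  refine hlog.congr_deriv ?_
  have hA : 0 < x ^ α := rpow_pos_of_pos hx α
  have hcα : (x / (x + v)) ^ α = x ^ α / (x + v) ^ α := div_rpow hx.le hxv.le α
  have hcα1 : (x / (x + v)) ^ (α - 1) = x ^ α / (x + v) ^ α / (x / (x + v)) := by
    rw [rpow_sub hc0, rpow_one, hcα]
  have hD := logCdfDenom_pos hα0 hv hx
  rw [logCdfDenom_eq hx hxv] at hD ⊢
  rw [hcα] at hq1
  rw [hcα1, hcα, div_eq_div_iff (by linarith) hD.ne']
  field_simp

lemma convexOn_paretoLogCdf (hα0 : 0 < α) (hα1 : α ≤ 1) (hv : 0 < v) :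
    ConvexOn ℝ (Ici 0) (paretoLogCdf α v) := by
  refine MonotoneOn.convexOn_of_deriv (convex_Ici 0) ?_ ?_ ?_
  · refine ContinuousOn.log ?_ fun x hx => (sub_pos.mpr (rpow_div_add_lt_one hα0 hv hx)).ne'
    refine continuousOn_const.sub (ContinuousOn.rpow_const ?_ fun _ _ => Or.inr hα0.le)
    exact continuousOn_id.div (continuous_add_const v).continuousOn
      fun x (hx : 0 ≤ x) => by positivity
  · rw [interior_Ici]
    exact fun x hx => (hasDerivAt_paretoLogCdf hα0 hv hx).differentiableAt.differentiableWithinAt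
  · rw [interior_Ici]
    intro x hx y hy hxy
    rw [(hasDerivAt_paretoLogCdf hα0 hv hx).deriv, (hasDerivAt_paretoLogCdf hα0 hv hy).deriv,
      neg_div, neg_div, neg_le_neg_iff]
    exact div_le_div_of_nonneg_left (by positivity) (logCdfDenom_pos hα0 hv hx)
      (monotoneOn_logCdfDenom hα0 hα1 hv hx hy hxy)

lemma paretoCdf_one_add_div_le (hα0 : 0 < α) (hα1 : α ≤ 1) (hv : 0 ≤ v) {θ : ℝ} (hθ0 : 0 < θ)
    (hθ1 : θ ≤ 1) : paretoCdf α (1 + v / θ) ≤ paretoCdf α (1 + v) ^ θ := by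
  rcases hv.eq_or_lt with rfl | hv
  · simp [paretoCdf, zero_rpow hθ0.ne']
  have hchord : paretoLogCdf α v θ ≤ θ * paretoLogCdf α v 1 := by
    have h := (convexOn_paretoLogCdf hα0 hα1 hv).2 (mem_Ici.mpr le_rfl) (mem_Ici.mpr zero_le_one)
      (sub_nonneg.mpr hθ1) hθ0.le (sub_add_cancel 1 θ)
    simpa [paretoLogCdf, zero_rpow hα0.ne'] using h
  rw [paretoLogCdf_eq hv.le hθ0, paretoLogCdf_eq hv.le one_pos, div_one] at hchord
  have hpos : ∀ y, 0 < y → 0 < paretoCdf α (1 + v / y) := fun y hy =>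
    paretoCdf_pos hα0 (by have := div_pos hv hy; linarith)
  calc paretoCdf α (1 + v / θ) = exp (log (paretoCdf α (1 + v / θ))) :=
        (exp_log (hpos θ hθ0)).symm
    _ ≤ exp (θ * log (paretoCdf α (1 + v))) := exp_le_exp.mpr hchord
    _ = paretoCdf α (1 + v) ^ θ := by
        rw [rpow_def_of_pos (by simpa using hpos 1 one_pos), mul_comm]

lemma le_one_of_mem_of_sum_eq_one {ι : Type*} {I : Finset ι} {θ : ι → ℝ}
    (hθ : ∀ i ∈ I, 0 ≤ θ i) (hsum : ∑ i ∈ I, θ i = 1) {i : ι} (hi : i ∈ I) : θ i ≤ 1 :=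
  hsum ▸ Finset.single_le_sum hθ hi

section Threshold

variable {m t θ : ℝ}

lemma self_le_sub_one_sub_mul_div (hmt : m ≤ t) (hθ0 : 0 < θ) (hθ1 : θ ≤ 1) :
    t ≤ (t - (1 - θ) * m) / θ := by
  rw [le_div_iff₀ hθ0]
  nlinarith

lemma paretoCdf_sub_one_sub_mul_div_le (hα0 : 0 < α) (hα1 : α ≤ 1) (hm : 1 ≤ m) (hmt : m ≤ t)
    (hθ0 : 0 < θ) (hθ1 : θ ≤ 1) : paretoCdf α ((t - (1 - θ) * m) / θ) ≤ paretoCdf α t ^ θ := by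
  have hts := self_le_sub_one_sub_mul_div hmt hθ0 hθ1
  have hle : (t - (1 - θ) * m) / θ ≤ 1 + (t - 1) / θ := by
    rw [div_le_iff₀ hθ0, add_mul, div_mul_cancel₀ _ hθ0.ne']
    nlinarith
  calc paretoCdf α ((t - (1 - θ) * m) / θ) ≤ paretoCdf α (1 + (t - 1) / θ) :=
        paretoCdf_le_paretoCdf hα0 (by linarith) hle
    _ ≤ paretoCdf α (1 + (t - 1)) ^ θ :=
        paretoCdf_one_add_div_le hα0 hα1 (by linarith) hθ0 hθ1
    _ = paretoCdf α t ^ θ := by rw [add_sub_cancel]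

lemma prod_paretoCdf_sub_one_sub_mul_div_le {ι : Type*} {I : Finset ι} {θ : ι → ℝ}
    (hθ : ∀ i ∈ I, 0 < θ i) (hsum : ∑ i ∈ I, θ i = 1) (hα0 : 0 < α) (hα1 : α ≤ 1)
    (hm : 1 ≤ m) (hmt : m ≤ t) :
    ∏ i ∈ I, paretoCdf α ((t - (1 - θ i) * m) / θ i) ≤ paretoCdf α t := by
  have hθ1 : ∀ i ∈ I, θ i ≤ 1 := fun i hi =>
    le_one_of_mem_of_sum_eq_one (fun j hj => (hθ j hj).le) hsum hi
  calc ∏ i ∈ I, paretoCdf α ((t - (1 - θ i) * m) / θ i)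
      ≤ ∏ i ∈ I, paretoCdf α t ^ θ i :=
        Finset.prod_le_prod
          (fun i hi => paretoCdf_nonneg hα0 <| hm.trans <| hmt.trans <|
            self_le_sub_one_sub_mul_div hmt (hθ i hi) (hθ1 i hi))
          (fun i hi => paretoCdf_sub_one_sub_mul_div_le hα0 hα1 hm hmt (hθ i hi) (hθ1 i hi))
    _ = paretoCdf α t := by
        rw [← rpow_sum_of_nonneg (paretoCdf_nonneg hα0 (hm.trans hmt)) fun i hi => (hθ i hi).le,
          hsum, rpow_one]

end Threshold

end Scalar

lemma mul_add_one_sub_mul_le_sum {ι : Type*} [Fintype ι] {θ z : ι → ℝ} {m : ℝ}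
    (hθ : ∀ j, 0 ≤ θ j) (hsum : ∑ j, θ j = 1) (hz : ∀ j, m ≤ z j) (i : ι) :
    θ i * z i + (1 - θ i) * m ≤ ∑ j, θ j * z j := by
  classical
  have hrest : ∑ j ∈ Finset.univ.erase i, θ j = 1 - θ i := by
    rw [← hsum, ← Finset.add_sum_erase _ _ (Finset.mem_univ i), add_sub_cancel_left]
  rw [← Finset.add_sum_erase _ _ (Finset.mem_univ i), ← hrest, Finset.sum_mul]
  gcongr with j
  exacts [hθ j, hz j]

section Probability

variable {Ω : Type*} [MeasurableSpace Ω] {P : Measure Ω} [IsProbabilityMeasure P]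

lemma IsPareto.measure_le_s8 {Y : Ω → ℝ} {α : ℝ} (hY : IsPareto P Y α) {s : ℝ} (hs : 1 ≤ s) :
    P {ω | Y ω ≤ s} = ENNReal.ofReal (paretoCdf α s) := by
  have hcompl : {ω | Y ω ≤ s} = {ω | s < Y ω}ᶜ := by ext; simp
  rw [hcompl, prob_compl_eq_one_sub (measurableSet_lt measurable_const hY.1), hY.2.2 s hs,
    paretoCdf, ENNReal.ofReal_sub _ (Real.rpow_nonneg (by linarith) _), ENNReal.ofReal_one]

lemma measure_biUnion_lt_eq_one_sub_prod {ι : Type*} {Y : ι → Ω → ℝ}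
    (hY : ∀ i, Measurable (Y i)) (hind : iIndepFun Y P) (I : Finset ι) (s : ι → ℝ) :
    P (⋃ i ∈ I, {ω | s i < Y i ω}) = 1 - ∏ i ∈ I, P {ω | Y i ω ≤ s i} := by
  have hU : MeasurableSet (⋃ i ∈ I, {ω | s i < Y i ω}) :=
    I.measurableSet_biUnion fun i _ => measurableSet_lt measurable_const (hY i)
  rw [← compl_compl (⋃ i ∈ I, {ω | s i < Y i ω}), prob_compl_eq_one_sub hU.compl, compl_iUnion₂]
  simp only [compl_ofPred, not_lt]
  exact congrArg (1 - ·) <| hind.meas_biInter fun i _ => ⟨Iic (s i), measurableSet_Iic, rfl⟩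

section Tail

variable {ι : Type*} [Fintype ι] {α : ℝ} {Xs : ι → Ω → ℝ} {θ : ι → ℝ} {m : ℝ}

lemma ofReal_rpow_neg_le_measure_lt_sum_mul_max (hα0 : 0 < α) (hα1 : α ≤ 1)
    (hXs : ∀ i, IsPareto P (Xs i) α) (hind : iIndepFun Xs P) (hθ : ∀ i, 0 ≤ θ i)
    (hsum : ∑ i, θ i = 1) (hm : 1 ≤ m) {t : ℝ} (hmt : m ≤ t) :
    ENNReal.ofReal (t ^ (-α)) ≤ P {ω | t < ∑ i, θ i * max (Xs i ω) m} := by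
  classical
  set I := Finset.univ.filter (θ · ≠ 0)
  set s : ι → ℝ := fun i => (t - (1 - θ i) * m) / θ i
  have hθI : ∀ i ∈ I, 0 < θ i := fun i hi =>
    (hθ i).lt_of_ne (Finset.mem_filter.mp hi).2.symm
  have hsumI : ∑ i ∈ I, θ i = 1 := by rw [Finset.sum_filter_ne_zero, hsum]
  have hs1 : ∀ i ∈ I, 1 ≤ s i := fun i hi => hm.trans <| hmt.trans <|
    self_le_sub_one_sub_mul_div hmt (hθI i hi)
      (le_one_of_mem_of_sum_eq_one (fun j hj => (hθI j hj).le) hsumI hi)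
  have hsub : ⋃ i ∈ I, {ω | s i < Xs i ω} ⊆ {ω | t < ∑ i, θ i * max (Xs i ω) m} := by
    intro ω
    simp only [mem_iUnion, mem_ofPred_eq]
    rintro ⟨i, hi, hω⟩
    have hθi := hθI i hi
    calc t = θ i * s i + (1 - θ i) * m := by simp only [s]; field_simp; ring
      _ < θ i * max (Xs i ω) m + (1 - θ i) * m := by gcongr; exact lt_max_of_lt_left hω
      _ ≤ _ := mul_add_one_sub_mul_le_sum (z := fun j => max (Xs j ω) m) hθ hsum
          (fun j => le_max_right _ _) i
  have hp1 : t ^ (-α) ≤ 1 := Real.rpow_le_one_of_one_le_of_nonpos (hm.trans hmt) (by linarith)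
  calc ENNReal.ofReal (t ^ (-α)) = 1 - ENNReal.ofReal (paretoCdf α t) := by
        rw [paretoCdf, ENNReal.ofReal_sub _ (Real.rpow_nonneg (by linarith) _), ENNReal.ofReal_one,
          ENNReal.sub_sub_cancel ENNReal.one_ne_top (ENNReal.ofReal_le_one.mpr hp1)]
    _ ≤ 1 - ∏ i ∈ I, ENNReal.ofReal (paretoCdf α (s i)) := by
        rw [← ENNReal.ofReal_prod_of_nonneg fun i hi => paretoCdf_nonneg hα0 (hs1 i hi)]
        gcongr
        exact prod_paretoCdf_sub_one_sub_mul_div_le hθI hsumI hα0 hα1 hm hmt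
    _ = P (⋃ i ∈ I, {ω | s i < Xs i ω}) := by
        rw [measure_biUnion_lt_eq_one_sub_prod (fun i => (hXs i).1) hind,
          Finset.prod_congr rfl fun i hi => (hXs i).measure_le_s8 (hs1 i hi)]
    _ ≤ _ := measure_mono hsub

lemma measure_lt_max_le_measure_lt_sum_mul_max {X : Ω → ℝ} (hα0 : 0 < α) (hα1 : α ≤ 1)
    (hX : IsPareto P X α) (hXs : ∀ i, IsPareto P (Xs i) α) (hind : iIndepFun Xs P)
    (hθ : ∀ i, 0 ≤ θ i) (hsum : ∑ i, θ i = 1) (hm : 1 ≤ m) (t : ℝ) :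
    P {ω | t < max (X ω) m} ≤ P {ω | t < ∑ i, θ i * max (Xs i ω) m} := by
  rcases lt_or_ge t m with htm | hmt
  · have hm_le : ∀ ω, m ≤ ∑ i, θ i * max (Xs i ω) m := fun ω =>
      calc m = ∑ i, θ i * m := by rw [← Finset.sum_mul, hsum, one_mul]
        _ ≤ _ := Finset.sum_le_sum fun i _ => mul_le_mul_of_nonneg_left (le_max_right _ _) (hθ i)
    have huniv : {ω | t < ∑ i, θ i * max (Xs i ω) m} = univ :=
      eq_univ_of_forall fun ω => htm.trans_le (hm_le ω)
    rw [huniv, measure_univ]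
    exact prob_le_one
  · have hset : {ω | t < max (X ω) m} = {ω | t < X ω} := by
      ext ω
      simp [hmt.not_gt]
    rw [hset, hX.2.2 t (hm.trans hmt)]
    exact ofReal_rpow_neg_le_measure_lt_sum_mul_max hα0 hα1 hXs hind hθ hsum hm hmt

end Tail

end Probability

/-- For iid Pareto(α), `α ∈ (0,1]`, weights in the simplex and a real `m ≥ 1`:
`max(X,m) ≤_st ∑ θᵢ max(Xᵢ,m)` and `(X−m)₊ ≤_st ∑ θᵢ (Xᵢ−m)₊`. -/
theorem stmt8 {Ω : Type*} [MeasurableSpace Ω] (P : Measure Ω) [IsProbabilityMeasure P]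
    (n : ℕ) (α : ℝ) (hα : α ∈ Set.Ioc (0:ℝ) 1) (m : ℝ) (hm : 1 ≤ m)
    (X : Ω → ℝ) (Xs : Fin n → Ω → ℝ)
    (hX : IsPareto P X α) (hXs : ∀ i, IsPareto P (Xs i) α)
    (hind : iIndepFun Xs P)
    (θ : Fin n → ℝ) (hθ : ∀ i, 0 ≤ θ i) (hsum : ∑ i, θ i = 1) :
    (∀ t : ℝ, P {ω | t < max (X ω) m} ≤ P {ω | t < ∑ i, θ i * max (Xs i ω) m})
    ∧ (∀ t : ℝ, P {ω | t < max (X ω - m) 0}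
        ≤ P {ω | t < ∑ i, θ i * max (Xs i ω - m) 0}) := by
  have hmax := measure_lt_max_le_measure_lt_sum_mul_max hα.1 hα.2 hX hXs hind hθ hsum hm
  refine ⟨hmax, fun t => ?_⟩
  have hshift : ∀ x, max (x - m) 0 = max x m - m := fun x => by rw [← max_sub_sub_right, sub_self]
  have hsum_shift : ∀ ω, ∑ i, θ i * (max (Xs i ω) m - m) = ∑ i, θ i * max (Xs i ω) m - m := by
    simp only [mul_sub, Finset.sum_sub_distrib, ← Finset.sum_mul, hsum, one_mul, implies_true]
  simp only [hshift, hsum_shift, lt_sub_iff_add_lt]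
  exact hmax (t + m)
end

section
/- Let X be a Pareto(α) random variable with α ∈ (0,1], let B₁,…,Bₙ be mutually exclusive (pairwise disjoint) events independent of X, and let c₁,…,cₙ ∈ [0,1]. Let A be an event independent of X with ℙ(A) = ∑ᵢ cᵢ ℙ(Bᵢ). Then X·𝟙_A ≤_st ∑ᵢ cᵢ X·𝟙_{Bᵢ}; i.e., for all t ≥ 0, ℙ(∑ᵢ cᵢ X 𝟙_{Bᵢ} > t) ≥ ℙ(X 𝟙_A > t). -/
/-!
Since `A` and the `Bᵢ` are independent of `X`, `P(X 𝟙_A > t) = P(A) P(X > t)` for `t ≥ 0`, while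
the sum equals `cᵢ X` on the disjoint events `Bᵢ`, so its tail is at least `∑ P(Bᵢ) P(cᵢ X > t)`.
As `P(A) = ∑ cᵢ P(Bᵢ)`, it suffices that `c P(X > t) ≤ P(c X > t)`, which for the Pareto tail
`t^{-α}` reduces to `c ≤ c^α`.
-/

open MeasureTheory ProbabilityTheory Set

lemma Real.mul_rpow_neg_le_div_rpow_neg {c t α : ℝ} (hc₀ : 0 < c) (hc₁ : c ≤ 1) (ht : 0 ≤ t)
    (hα : α ≤ 1) : c * t ^ (-α) ≤ (t / c) ^ (-α) := by
  rw [Real.div_rpow ht hc₀.le, Real.rpow_neg hc₀.le, div_inv_eq_mul, mul_comm]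
  gcongr
  exact Real.self_le_rpow_of_le_one hc₀.le hc₁ hα

namespace IsPareto

variable {Ω : Type*} [MeasurableSpace Ω] {P : Measure Ω} [IsProbabilityMeasure P]
  {X : Ω → ℝ} {α : ℝ}

lemma measure_lt_eq_one (hX : IsPareto P X α) {t : ℝ} (ht : t < 1) : P {ω | t < X ω} = 1 :=
  le_antisymm prob_le_one <| hX.2.1.symm.le.trans <| measure_mono fun _ hω => ht.trans_le hω

lemma measure_lt_le_s10 (hX : IsPareto P X α) (hα : 0 ≤ α) {t : ℝ} (ht : 0 < t) :
    P {ω | t < X ω} ≤ ENNReal.ofReal (t ^ (-α)) := by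
  rcases le_or_gt 1 t with h | h
  · exact (hX.2.2 t h).le
  · rw [hX.measure_lt_eq_one h, ← ENNReal.ofReal_one]
    exact ENNReal.ofReal_le_ofReal
      (Real.one_le_rpow_of_pos_of_le_one_of_nonpos ht h.le (neg_nonpos.2 hα))

lemma ofReal_mul_measure_lt_le_measure_lt_mul (hX : IsPareto P X α) (hα : α ∈ Icc 0 1)
    {c t : ℝ} (hc : c ∈ Icc 0 1) (ht : 0 ≤ t) :
    ENNReal.ofReal c * P {ω | t < X ω} ≤ P {ω | t < c * X ω} := by
  rcases hc.1.eq_or_lt with rfl | hc₀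
  · simp
  have hset : {ω | t < c * X ω} = {ω | t / c < X ω} := by
    ext ω
    rw [mem_ofPred_eq, mem_ofPred_eq, div_lt_iff₀ hc₀, mul_comm]
  rw [hset]
  rcases lt_or_ge (t / c) 1 with h | h
  · rw [hX.measure_lt_eq_one h]
    exact mul_le_one' (ENNReal.ofReal_le_one.2 hc.2) prob_le_one
  · have ht₀ : 0 < t := by
      have := (le_div_iff₀ hc₀).1 h
      linarith
    calc ENNReal.ofReal c * P {ω | t < X ω}
        ≤ ENNReal.ofReal c * ENNReal.ofReal (t ^ (-α)) := by
          gcongr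
          exact hX.measure_lt_le_s10 hα.1 ht₀
      _ = ENNReal.ofReal (c * t ^ (-α)) := (ENNReal.ofReal_mul hc.1).symm
      _ ≤ ENNReal.ofReal ((t / c) ^ (-α)) :=
          ENNReal.ofReal_le_ofReal (Real.mul_rpow_neg_le_div_rpow_neg hc₀ hc.2 ht hα.2)
      _ = P {ω | t / c < X ω} := (hX.2.2 _ h).symm

end IsPareto

lemma sum_mul_indicator_of_mem {Ω ι : Type*} [Fintype ι] {B : ι → Set Ω}
    (hB : Pairwise (Function.onFun Disjoint B)) (f : ι → ℝ) {i : ι} {ω : Ω} (hω : ω ∈ B i) :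
    ∑ j, f j * (B j).indicator (fun _ => (1 : ℝ)) ω = f i := by
  rw [Finset.sum_eq_single_of_mem i (Finset.mem_univ i), indicator_of_mem hω, mul_one]
  intro j _ hji
  rw [indicator_of_notMem (disjoint_right.1 (hB hji) hω), mul_zero]

section Indicator

variable {Ω : Type*} [MeasurableSpace Ω] {P : Measure Ω}

lemma ProbabilityTheory.IndepFun.measure_preimage_inter_eq_mul_of_indicator {β : Type*}
    [MeasurableSpace β] {X : Ω → β} {A : Set Ω}
    (h : IndepFun X (A.indicator fun _ => (1 : ℝ)) P) {S : Set β} (hS : MeasurableSet S) :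
    P (X ⁻¹' S ∩ A) = P (X ⁻¹' S) * P A := by
  have hA : (A.indicator fun _ => (1 : ℝ)) ⁻¹' {1} = A := by
    ext ω
    by_cases hω : ω ∈ A <;> simp [hω]
  simpa only [hA] using h.measure_inter_preimage_eq_mul _ _ hS (measurableSet_singleton 1)

lemma measure_lt_mul_indicator_eq_mul {X : Ω → ℝ} {A : Set Ω}
    (h : IndepFun X (A.indicator fun _ => (1 : ℝ)) P) {t : ℝ} (ht : 0 ≤ t) :
    P {ω | t < X ω * A.indicator (fun _ => (1 : ℝ)) ω} = P {ω | t < X ω} * P A := by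
  have hset : {ω | t < X ω * A.indicator (fun _ => (1 : ℝ)) ω} = X ⁻¹' Ioi t ∩ A := by
    ext ω
    by_cases hω : ω ∈ A <;> simp [hω, ht.not_gt]
  rw [hset, h.measure_preimage_inter_eq_mul_of_indicator measurableSet_Ioi]
  rfl

lemma sum_measure_lt_mul_le_measure_lt_sum {ι : Type*} [Fintype ι] {X : Ω → ℝ}
    (hX : Measurable X) {B : ι → Set Ω} (hBmeas : ∀ i, MeasurableSet (B i))
    (hBdisj : Pairwise (Function.onFun Disjoint B))
    (hindB : IndepFun X (fun ω i => (B i).indicator (fun _ => (1 : ℝ)) ω) P) (c : ι → ℝ)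
    (t : ℝ) :
    ∑ i, P {ω | t < c i * X ω} * P (B i)
      ≤ P {ω | t < ∑ i, c i * X ω * (B i).indicator (fun _ => (1 : ℝ)) ω} := by
  set S : ι → Set ℝ := fun i => {x | t < c i * x}
  have hS : ∀ i, MeasurableSet (S i) :=
    fun i => measurableSet_lt measurable_const (measurable_id.const_mul _)
  have hindBi : ∀ i, IndepFun X ((B i).indicator fun _ => (1 : ℝ)) P :=
    fun i => hindB.comp measurable_id (measurable_pi_apply i)
  have hsub : (⋃ i, X ⁻¹' S i ∩ B i)
      ⊆ {ω | t < ∑ i, c i * X ω * (B i).indicator (fun _ => (1 : ℝ)) ω} := by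
    rintro ω ⟨_, ⟨i, rfl⟩, hωS, hωB⟩
    rwa [mem_ofPred_eq, sum_mul_indicator_of_mem hBdisj _ hωB]
  calc ∑ i, P {ω | t < c i * X ω} * P (B i)
      = ∑ i, P (X ⁻¹' S i ∩ B i) :=
        Finset.sum_congr rfl fun i _ =>
          ((hindBi i).measure_preimage_inter_eq_mul_of_indicator (hS i)).symm
    _ = P (⋃ i, X ⁻¹' S i ∩ B i) := by
        rw [measure_iUnion (fun i j hij => (hBdisj hij).mono inter_subset_right inter_subset_right)
          fun i => (hX (hS i)).inter (hBmeas i), tsum_fintype]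
    _ ≤ _ := measure_mono hsub

end Indicator

theorem stmt10_general {Ω : Type*} [MeasurableSpace Ω] (P : Measure Ω) [IsProbabilityMeasure P]
    (n : ℕ) (α : ℝ) (hα : α ∈ Set.Ioc (0:ℝ) 1)
    (X : Ω → ℝ) (hX : IsPareto P X α)
    (B : Fin n → Set Ω) (hBmeas : ∀ i, MeasurableSet (B i))
    (hBdisj : Pairwise (Function.onFun Disjoint B))
    (hindB : IndepFun X (fun ω i => (B i).indicator (fun _ => (1:ℝ)) ω) P)
    (c : Fin n → ℝ) (hc : ∀ i, c i ∈ Set.Icc (0:ℝ) 1)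
    (A : Set Ω)
    (hindA : IndepFun X (A.indicator (fun _ => (1:ℝ))) P)
    (hPA : P A = ∑ i, ENNReal.ofReal (c i) * P (B i)) :
    ∀ t : ℝ, P {ω | t < X ω * A.indicator (fun _ => (1:ℝ)) ω}
      ≤ P {ω | t < ∑ i, c i * X ω * (B i).indicator (fun _ => (1:ℝ)) ω} := by
  intro t
  rcases lt_or_ge t 0 with ht | ht
  · have hsum_nonneg : ∀ ω, 1 ≤ X ω →
        0 ≤ ∑ i, c i * X ω * (B i).indicator (fun _ => (1:ℝ)) ω := fun ω hω =>
      Finset.sum_nonneg fun i _ =>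
        mul_nonneg (mul_nonneg (hc i).1 (zero_le_one.trans hω)) (indicator_nonneg (by simp) ω)
    calc _ ≤ 1 := prob_le_one
      _ = P {ω | 1 ≤ X ω} := hX.2.1.symm
      _ ≤ _ := measure_mono fun ω hω => ht.trans_le (hsum_nonneg ω hω)
  · calc P {ω | t < X ω * A.indicator (fun _ => (1:ℝ)) ω}
        = ∑ i, ENNReal.ofReal (c i) * P {ω | t < X ω} * P (B i) := by
          rw [measure_lt_mul_indicator_eq_mul hindA ht, hPA, Finset.mul_sum]
          exact Finset.sum_congr rfl fun i _ => by ring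
      _ ≤ ∑ i, P {ω | t < c i * X ω} * P (B i) := by
          gcongr with i
          exact hX.ofReal_mul_measure_lt_le_measure_lt_mul (Ioc_subset_Icc_self hα) (hc i) ht
      _ ≤ _ := sum_measure_lt_mul_le_measure_lt_sum hX.1 hBmeas hBdisj hindB c t

/-- Scaling lemma: for `X ~ Pareto(α)`, `α ∈ (0,1]`, pairwise disjoint events
`B₁,…,Bₙ` independent of `X`, coefficients `cᵢ ∈ [0,1]`, and an event `A` independent
of `X` with `P(A) = ∑ cᵢ P(Bᵢ)`, we have `X·𝟙_A ≤_st ∑ cᵢ X·𝟙_{Bᵢ}`. -/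
theorem stmt10 {Ω : Type*} [MeasurableSpace Ω] (P : Measure Ω) [IsProbabilityMeasure P]
    (n : ℕ) (α : ℝ) (hα : α ∈ Set.Ioc (0:ℝ) 1)
    (X : Ω → ℝ) (hX : IsPareto P X α)
    (B : Fin n → Set Ω) (hBmeas : ∀ i, MeasurableSet (B i))
    (hBdisj : Pairwise (Function.onFun Disjoint B))
    (hindB : IndepFun X (fun ω i => (B i).indicator (fun _ => (1:ℝ)) ω) P)
    (c : Fin n → ℝ) (hc : ∀ i, c i ∈ Set.Icc (0:ℝ) 1)
    (A : Set Ω) (hA : MeasurableSet A)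
    (hindA : IndepFun X (A.indicator (fun _ => (1:ℝ))) P)
    (hPA : P A = ∑ i, ENNReal.ofReal (c i) * P (B i)) :
    ∀ t : ℝ, P {ω | t < X ω * A.indicator (fun _ => (1:ℝ)) ω}
      ≤ P {ω | t < ∑ i, c i * X ω * (B i).indicator (fun _ => (1:ℝ)) ω} :=
  stmt10_general P n α hα X hX B hBmeas hBdisj hindB c hc A hindA hPA
end

section
/- Let X be a Pareto(α) random variable with α ∈ (0,1], c ∈ (0,1], and let A, B be events independent of X with ℙ(A) = c·ℙ(B). Then X·𝟙_A ≤_st c·X·𝟙_B. Moreover, if instead α > 1 (finite mean) and c < 1, then X·𝟙_A ≤_st c·X·𝟙_B fails. -/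
/-! A Pareto(α) tail is `P(X > s) = (max 1 s)^(-α)` for every real `s`, and by independence
`P(Y·𝟙_E > t) = P(Y > t)·P(E)` for `t ≥ 0` (for `t < 0` the event `c·X·𝟙_B > t` is almost sure).
With `P(A) = c·P(B)` the claim becomes `c·(max 1 t)^(-α) ≤ (max 1 (t/c))^(-α)`. Since
`max 1 (t/c) ≤ (max 1 t)/c`, the right side is at least `c^α·(max 1 t)^(-α)`, and `c ≤ c^α` for
`α ≤ 1`. At `t = 1` the comparison is exactly `c ≤ c^α`, which fails for `α > 1` and `c < 1`. -/

open MeasureTheory ProbabilityTheory Set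

namespace IsPareto

variable {Ω : Type*} [MeasurableSpace Ω] {P : Measure Ω} [IsProbabilityMeasure P]
  {X : Ω → ℝ} {α : ℝ}

lemma measure_lt (hX : IsPareto P X α) (s : ℝ) :
    P {ω | s < X ω} = ENNReal.ofReal (max 1 s ^ (-α)) := by
  obtain ⟨-, hX1, hXs⟩ := hX
  rcases lt_or_ge s 1 with hs | hs
  · rw [max_eq_left hs.le, Real.one_rpow, ENNReal.ofReal_one]
    exact le_antisymm prob_le_one (hX1 ▸ measure_mono fun ω (h : 1 ≤ X ω) => hs.trans_le h)
  · rw [max_eq_right hs, hXs s hs]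

lemma measure_const_mul_lt (hX : IsPareto P X α) {c : ℝ} (hc : 0 < c) (t : ℝ) :
    P {ω | t < c * X ω} = ENNReal.ofReal (max 1 (t / c) ^ (-α)) := by
  simp only [← hX.measure_lt, div_lt_iff₀' hc]

end IsPareto

section indicator

variable {Ω : Type*} [MeasurableSpace Ω] {P : Measure Ω} {Y : Ω → ℝ} {E : Set Ω} {t : ℝ}

lemma measure_lt_mul_indicator_of_indepFun (hind : IndepFun Y (E.indicator fun _ => (1 : ℝ)) P)
    (ht : 0 ≤ t) :
    P {ω | t < Y ω * E.indicator (fun _ => (1 : ℝ)) ω} = P {ω | t < Y ω} * P E := by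
  have hset : {ω | t < Y ω * E.indicator (fun _ => (1 : ℝ)) ω}
      = Y ⁻¹' Ioi t ∩ (E.indicator fun _ => (1 : ℝ)) ⁻¹' {1} := by
    ext ω
    by_cases h : ω ∈ E <;> simp [h, ht.not_gt]
  rw [hset, hind.measure_inter_preimage_eq_mul _ _ measurableSet_Ioi (measurableSet_singleton 1),
    indicator_const_preimage_eq_union]
  simp only [mem_singleton_iff, ↓reduceIte, zero_ne_one, union_empty]
  rfl

lemma measure_lt_mul_indicator_of_neg [IsProbabilityMeasure P] (hY : ∀ᵐ ω ∂P, 0 ≤ Y ω)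
    (ht : t < 0) : P {ω | t < Y ω * E.indicator (fun _ => (1 : ℝ)) ω} = 1 := by
  refine le_antisymm prob_le_one (measure_univ (μ := P) ▸ measure_mono_ae ?_)
  filter_upwards [hY] with ω hω _
  have hE : 0 ≤ E.indicator (fun _ => (1 : ℝ)) ω := indicator_nonneg (fun _ _ => zero_le_one) ω
  exact ht.trans_le (mul_nonneg hω hE)

end indicator

lemma mul_max_one_rpow_neg_le {c α : ℝ} (hc : 0 < c) (hc1 : c ≤ 1) (hα : 0 ≤ α) (hα1 : α ≤ 1)
    (t : ℝ) : c * max 1 t ^ (-α) ≤ max 1 (t / c) ^ (-α) := by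
  set u := max 1 t
  have hu : 0 < u := lt_max_of_lt_left one_pos
  have hmax : max 1 (t / c) ≤ u / c :=
    max_le ((one_le_div hc).2 (hc1.trans (le_max_left _ _)))
      (div_le_div_of_nonneg_right (le_max_right _ _) hc.le)
  calc c * u ^ (-α) ≤ c ^ α * u ^ (-α) := by
        gcongr
        exact Real.self_le_rpow_of_le_one hc.le hc1 hα1
    _ = (u / c) ^ (-α) := by
        rw [Real.div_rpow hu.le hc.le, Real.rpow_neg hc.le, div_inv_eq_mul, mul_comm]
    _ ≤ max 1 (t / c) ^ (-α) :=
        Real.rpow_le_rpow_of_nonpos (lt_max_of_lt_left one_pos) hmax (neg_nonpos.2 hα)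

theorem stmt11_general {Ω : Type*} [MeasurableSpace Ω] (P : Measure Ω) [IsProbabilityMeasure P]
    (α c : ℝ) (hα : 0 < α) (hc : 0 < c) (hc1 : c ≤ 1)
    (X : Ω → ℝ) (hX : IsPareto P X α)
    (A B : Set Ω)
    (hindA : IndepFun X (A.indicator (fun _ => (1:ℝ))) P)
    (hindB : IndepFun X (B.indicator (fun _ => (1:ℝ))) P)
    (hPA : P A = ENNReal.ofReal c * P B) :
    (α ≤ 1 →
      ∀ t : ℝ, P {ω | t < X ω * A.indicator (fun _ => (1:ℝ)) ω}
        ≤ P {ω | t < c * X ω * B.indicator (fun _ => (1:ℝ)) ω})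
    ∧ (1 < α → c < 1 → P B ≠ 0 →
      ¬ ∀ t : ℝ, P {ω | t < X ω * A.indicator (fun _ => (1:ℝ)) ω}
        ≤ P {ω | t < c * X ω * B.indicator (fun _ => (1:ℝ)) ω}) := by
  have hindcB : IndepFun (fun ω => c * X ω) (B.indicator fun _ => (1 : ℝ)) P :=
    hindB.comp (measurable_const_mul c) measurable_id
  have tails : ∀ t, 0 ≤ t →
      P {ω | t < X ω * A.indicator (fun _ => (1:ℝ)) ω}
        = ENNReal.ofReal (c * max 1 t ^ (-α)) * P B ∧
      P {ω | t < c * X ω * B.indicator (fun _ => (1:ℝ)) ω}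
        = ENNReal.ofReal (max 1 (t / c) ^ (-α)) * P B := fun t ht =>
    ⟨by rw [measure_lt_mul_indicator_of_indepFun hindA ht, hX.measure_lt, hPA, ← mul_assoc,
          mul_comm c, ENNReal.ofReal_mul (by positivity)],
      by rw [measure_lt_mul_indicator_of_indepFun hindcB ht, hX.measure_const_mul_lt hc]⟩
  refine ⟨fun hα1 t => ?_, fun hα1 hc1' hPB hdom => ?_⟩
  · rcases lt_or_ge t 0 with ht | ht
    · have hcX : ∀ᵐ ω ∂P, 0 ≤ c * X ω := by
        filter_upwards [hX.ae_one_le] with ω hω using by positivity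
      exact (measure_lt_mul_indicator_of_neg hcX ht).symm ▸ prob_le_one
    · rw [(tails t ht).1, (tails t ht).2]
      gcongr
      exact mul_max_one_rpow_neg_le hc hc1 hα.le hα1 t
  · have hcα : c ≤ c ^ α := by
      have h1 := hdom 1
      rwa [(tails 1 zero_le_one).1, (tails 1 zero_le_one).2,
        ENNReal.mul_le_mul_iff_left hPB (measure_ne_top P B),
        ENNReal.ofReal_le_ofReal_iff (by positivity), max_self, Real.one_rpow, mul_one,
        max_eq_right ((one_le_div hc).2 hc1), one_div, Real.inv_rpow hc.le, Real.rpow_neg hc.le,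
        inv_inv] at h1
    exact (Real.rpow_lt_self_of_lt_one hc hc1' hα1).not_ge hcα

/-- For `X ~ Pareto(α)`, `c ∈ (0,1]`, and events `A, B` independent of `X` with
`P(A) = c·P(B)`: if `α ∈ (0,1]` then `X·𝟙_A ≤_st c·X·𝟙_B`; whereas if `α > 1`
(finite mean), `c < 1` and `P(B) > 0`, the dominance fails. -/
theorem stmt11 {Ω : Type*} [MeasurableSpace Ω] (P : Measure Ω) [IsProbabilityMeasure P]
    (α c : ℝ) (hα : 0 < α) (hc : 0 < c) (hc1 : c ≤ 1)
    (X : Ω → ℝ) (hX : IsPareto P X α)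
    (A B : Set Ω) (hA : MeasurableSet A) (hB : MeasurableSet B)
    (hindA : IndepFun X (A.indicator (fun _ => (1:ℝ))) P)
    (hindB : IndepFun X (B.indicator (fun _ => (1:ℝ))) P)
    (hPA : P A = ENNReal.ofReal c * P B) :
    (α ≤ 1 →
      ∀ t : ℝ, P {ω | t < X ω * A.indicator (fun _ => (1:ℝ)) ω}
        ≤ P {ω | t < c * X ω * B.indicator (fun _ => (1:ℝ)) ω})
    ∧ (1 < α → c < 1 → P B ≠ 0 →
      ¬ ∀ t : ℝ, P {ω | t < X ω * A.indicator (fun _ => (1:ℝ)) ω}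
        ≤ P {ω | t < c * X ω * B.indicator (fun _ => (1:ℝ)) ω}) :=
  stmt11_general P α c hα hc hc1 X hX A B hindA hindB hPA
end
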